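/- arXiv:1804.10259 — 7 statements merged into one kernel-verified Lean document; each statement's English description precedes it below -/
import Mathlib

section
/- Let f : ℝ → [0,∞) be nonincreasing and let λ > 0 be such that M := ∫_ℝ f(t)e^{λt} dt < ∞. Then for every s ∈ ℝ, f(s) ≤ (λe^λ/(e^λ − 1)) · M · e^{−λs}. -/
/-!
Since `f` is nonincreasing, `f ≥ f s` on `(s - 1, s]`, so the Laplace integral is at least
`f s * ∫_{s-1}^{s} e^{λt} dt = f s * e^{λs} (e^λ - 1) / (λ e^λ)`.
-/

open MeasureTheory Real Set Filter

theorem integral_exp_mul_Ioc {l : ℝ} (hl : l ≠ 0) {a b : ℝ} (hab : a ≤ b) :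
    ∫ t in Ioc a b, exp (l * t) = (exp (l * b) - exp (l * a)) / l := by
  rw [← intervalIntegral.integral_of_le hab,
    intervalIntegral.integral_comp_mul_left (fun x => exp x) hl, integral_exp, smul_eq_mul]
  ring

theorem mul_setIntegral_le_integral_of_antitone {f g : ℝ → ℝ} (hf : Antitone f)
    (hg : ∀ t, 0 ≤ g t) (hfg : ∀ t, 0 ≤ f t * g t) (hfg_int : Integrable fun t => f t * g t)
    {S : Set ℝ} (hS : MeasurableSet S) (hg_int : IntegrableOn g S) {s : ℝ} (hSs : S ⊆ Iic s) :
    f s * ∫ t in S, g t ≤ ∫ t, f t * g t := by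
  rw [← integral_const_mul]
  calc ∫ t in S, f s * g t ≤ ∫ t in S, f t * g t :=
        setIntegral_mono_on (hg_int.const_mul (f s)) hfg_int.integrableOn hS
          fun t ht => mul_le_mul_of_nonneg_right (hf (hSs ht)) (hg t)
    _ ≤ ∫ t, f t * g t := setIntegral_le_integral hfg_int (Eventually.of_forall hfg)

/-- a nonnegative nonincreasing function whose bilateral Laplace integral
`M = ∫ f(t) e^{λt} dt` converges for some `λ > 0` satisfies the pointwise bound
`f(s) ≤ (λ e^λ/(e^λ - 1)) ⬝ M ⬝ e^{-λ s}`. -/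
theorem decay_estimate_from_laplace
    (f : ℝ → ℝ) (hf_nonneg : ∀ s, 0 ≤ f s) (hf_anti : Antitone f)
    (l : ℝ) (hl : 0 < l)
    (hint : Integrable fun t => f t * Real.exp (l * t)) :
    ∀ s : ℝ, f s ≤ (l * Real.exp l / (Real.exp l - 1))
        * (∫ t, f t * Real.exp (l * t)) * Real.exp (-l * s) := by
  intro s
  have hwindow := mul_setIntegral_le_integral_of_antitone hf_anti (fun t => (exp_pos (l * t)).le)
    (fun t => mul_nonneg (hf_nonneg t) (exp_pos (l * t)).le) hint measurableSet_Ioc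
    (by fun_prop : Continuous fun t => exp (l * t)).integrableOn_Ioc
    (Ioc_subset_Iic_self : Ioc (s - 1) s ⊆ Iic s)
  rw [integral_exp_mul_Ioc hl.ne' (by linarith)] at hwindow
  have hwindow_eq : (exp (l * s) - exp (l * (s - 1))) / l
      = exp (l * s) * (exp l - 1) / (l * exp l) := by
    rw [mul_sub, mul_one, exp_sub]
    field_simp
  have he : 0 < exp l - 1 := by linarith [add_one_lt_exp hl.ne']
  rw [hwindow_eq, ← le_div_iff₀ (by positivity)] at hwindow
  refine hwindow.trans (le_of_eq ?_)
  rw [neg_mul, exp_neg]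
  field_simp
end

section
/- Let f : ℝ → [0,∞) be nonincreasing and bounded with abscissa σ(f) > 0, and let g ∈ L¹(ℝ) ∩ L∞(ℝ) be nonnegative with abscissa σ(g) > 0. Then for every μ > 0 with μ < σ(f) + min{σ(g), σ(f)}, one has ∫_ℝ f(s)·(g*f)(s)·e^{μs} ds < ∞, where (g*f)(s) := ∫_ℝ g(s−τ)f(τ) dτ; in other words, σ(f·(g*f)) ≥ σ(f) + min{σ(g), σ(f)}. -/
open MeasureTheory Real Set Filter

noncomputable section

/-- The set of positive exponents at which the bilateral Laplace transform of `f`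
converges absolutely. -/
def lapSet (f : ℝ → ℝ) : Set ℝ :=
  {l : ℝ | 0 < l ∧ Integrable (fun s => f s * Real.exp (l * s))}

/-- The abscissa of convergence of the bilateral Laplace transform of `f`,
as an extended real number (`⊤` if the transform converges for all `λ > 0`). -/
def lapAbsc (f : ℝ → ℝ) : EReal :=
  sSup ((fun l : ℝ => (l : EReal)) '' lapSet f)

/-- measurability from Laplace integrability -/
lemma aesm_of_lap {f : ℝ → ℝ} {l : ℝ} (h : Integrable fun s => f s * Real.exp (l * s)) :
    AEStronglyMeasurable f (volume : Measure ℝ) := by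
  have hc : Continuous fun s : ℝ => Real.exp (-(l * s)) := by continuity
  have := h.aestronglyMeasurable.mul hc.aestronglyMeasurable
  refine this.congr (Filter.Eventually.of_forall fun s => ?_)
  simp only [Pi.mul_apply]
  rw [mul_assoc, ← Real.exp_add, add_neg_cancel, Real.exp_zero, mul_one]

/-- downward closure of `lapSet` for bounded nonnegative functions -/
lemma lapSet_down {f : ℝ → ℝ} {C : ℝ} (hnn : ∀ s, 0 ≤ f s) (hC : ∀ s, f s ≤ C)
    {l l' : ℝ} (hl : l ∈ lapSet f) (h0 : 0 < l') (hle : l' ≤ l) : l' ∈ lapSet f := by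
  obtain ⟨hlpos, hint⟩ := hl
  refine ⟨h0, ?_⟩
  have hm : AEStronglyMeasurable (fun s => f s * Real.exp (l' * s)) (volume : Measure ℝ) :=
    (aesm_of_lap hint).mul (by continuity : Continuous fun s : ℝ => Real.exp (l' * s)).aestronglyMeasurable
  rw [← integrableOn_univ, ← Iic_union_Ioi (a := (0:ℝ)), integrableOn_union]
  constructor
  · -- on Iic 0, dominate by C * exp (l' * s)
    have hexp : IntegrableOn (fun s => Real.exp (l' * s)) (Iic (0:ℝ)) := by
      have h1 : Integrable ((Iic (0:ℝ)).indicator Real.exp) :=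
        (integrableOn_exp_Iic 0).integrable_indicator measurableSet_Iic
      have h2 := h1.comp_mul_left' (R := l') (ne_of_gt h0)
      rw [← integrable_indicator_iff measurableSet_Iic]
      refine h2.congr (Filter.Eventually.of_forall fun x => ?_)
      by_cases hx : x ≤ 0
      · have hx' : l' * x ≤ 0 := mul_nonpos_iff.2 (Or.inl ⟨h0.le, hx⟩)
        simp [Set.indicator_of_mem, mem_Iic.mpr hx, mem_Iic.mpr hx']
      · have hx' : ¬ (l' * x ≤ 0) := by
          push_neg at hx ⊢
          exact mul_pos h0 hx
        simp [Set.indicator_of_notMem, hx, hx', mem_Iic]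
    refine Integrable.mono' (hexp.const_mul C) hm.restrict
      (Filter.Eventually.of_forall fun s => ?_)
    rw [Real.norm_eq_abs, abs_of_nonneg (mul_nonneg (hnn s) (Real.exp_pos _).le)]
    exact mul_le_mul_of_nonneg_right (hC s) (Real.exp_pos _).le
  · -- on Ioi 0, dominate by f s * exp (l * s)
    refine Integrable.mono' hint.integrableOn hm.restrict ?_
    refine (ae_restrict_iff' measurableSet_Ioi).2 (Filter.Eventually.of_forall fun s hs => ?_)
    rw [Real.norm_eq_abs, abs_of_nonneg (mul_nonneg (hnn s) (Real.exp_pos _).le)]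
    exact mul_le_mul_of_nonneg_left
      (Real.exp_le_exp.2 (mul_le_mul_of_nonneg_right hle (le_of_lt hs))) (hnn s)

/-- decay bound for antitone nonnegative integrable-against-exp functions -/
lemma decay_bound {f : ℝ → ℝ} (hnn : ∀ s, 0 ≤ f s) (hanti : Antitone f) {a : ℝ} (ha : 0 < a)
    (hint : Integrable fun s => f s * Real.exp (a * s)) (s : ℝ) :
    f s * Real.exp (a * s) ≤ (∫ t, f t * Real.exp (a * t)) * Real.exp a := by
  set I := ∫ t, f t * Real.exp (a * t) with hI
  have h1 : f s * Real.exp (a * (s - 1)) ≤ I := by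
    have hconst : ∀ t ∈ Ioc (s - 1) s, f s * Real.exp (a * (s - 1)) ≤ f t * Real.exp (a * t) := by
      intro t ht
      exact mul_le_mul (hanti ht.2) (Real.exp_le_exp.2 (mul_le_mul_of_nonneg_left ht.1.le ha.le))
        (Real.exp_pos _).le (hnn t)
    have hvol : (volume (Ioc (s - 1) s)).toReal = 1 := by
      rw [Real.volume_Ioc]
      norm_num
    have h2 := setIntegral_ge_of_const_le_real (μ := volume) measurableSet_Ioc
      (by rw [Real.volume_Ioc]; exact ENNReal.ofReal_ne_top) hconst hint.integrableOn
    simp only [Measure.real, hvol, mul_one] at h2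
    refine h2.trans ?_
    exact setIntegral_le_integral hint (Filter.Eventually.of_forall fun t =>
      mul_nonneg (hnn t) (Real.exp_pos _).le)
  calc f s * Real.exp (a * s) = f s * Real.exp (a * (s - 1)) * Real.exp a := by
        rw [mul_assoc, ← Real.exp_add]; ring_nf
    _ ≤ I * Real.exp a := mul_le_mul_of_nonneg_right h1 (Real.exp_pos _).le

/-- splitting a strict EReal inequality with a sum -/
lemma ereal_split {c : ℝ} {A M : EReal} (hA : 0 < A) (hM : 0 < M) (h : (c : EReal) < A + M) :
    ∃ u v : ℝ, (u : EReal) < A ∧ (v : EReal) < M ∧ c ≤ u + v := by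
  by_cases hAt : A = ⊤
  · obtain ⟨v, _, hvM⟩ := EReal.exists_between_coe_real hM
    exact ⟨c - v, v, hAt ▸ EReal.coe_lt_top _, hvM, by ring_nf; exact le_refl _⟩
  · have hAb : A ≠ ⊥ := ne_of_gt (lt_trans (by norm_num) hA)
    lift A to ℝ using ⟨hAt, hAb⟩ with a
    by_cases hMt : M = ⊤
    · obtain ⟨u, hu0, huA⟩ := EReal.exists_between_coe_real hA
      exact ⟨u, c - u, huA, hMt ▸ EReal.coe_lt_top _, by ring_nf; exact le_refl _⟩
    · have hMb : M ≠ ⊥ := ne_of_gt (lt_trans (by norm_num) hM)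
      lift M to ℝ using ⟨hMt, hMb⟩ with m
      rw [← EReal.coe_add, EReal.coe_lt_coe_iff] at h
      refine ⟨a - (a + m - c) / 2, m - (a + m - c) / 2, ?_, ?_, by ring_nf; linarith⟩
      · exact_mod_cast sub_lt_self a (by linarith)
      · exact_mod_cast sub_lt_self m (by linarith)

/-- for a bounded, nonnegative, nonincreasing `f` with positive abscissa
and a nonnegative `g ∈ L¹ ∩ L∞` with positive abscissa, one has
`σ(f⬝(g*f)) ≥ σ(f) + min{σ(g), σ(f)}`: the Laplace transform of `f⬝(g*f)` converges
at every `μ ∈ (0, σ(f) + min{σ(g), σ(f)})`. -/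
theorem abscissa_of_f_mul_conv
    (f g : ℝ → ℝ) (hf_nonneg : ∀ s, 0 ≤ f s) (hf_anti : Antitone f)
    (hf_bdd : ∃ C, ∀ s, f s ≤ C) (hσf : 0 < lapAbsc f)
    (hg_nonneg : ∀ s, 0 ≤ g s) (hg_int : Integrable g) (hg_bdd : ∃ C, ∀ s, g s ≤ C)
    (hσg : 0 < lapAbsc g) :
    ∀ μ : ℝ, 0 < μ → (μ : EReal) < lapAbsc f + min (lapAbsc g) (lapAbsc f) →
      Integrable fun s => f s * (∫ τ, g (s - τ) * f τ) * Real.exp (μ * s) := by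
  intro μ hμ hlt
  obtain ⟨Cf, hCf⟩ := hf_bdd
  obtain ⟨Cg, hCg⟩ := hg_bdd
  -- extract exponents
  have hM : (0 : EReal) < min (lapAbsc g) (lapAbsc f) := lt_min hσg hσf
  obtain ⟨u, v, huA, hvM, huv⟩ := ereal_split hσf hM hlt
  have hvg : (v : EReal) < lapAbsc g := lt_of_lt_of_le hvM (min_le_left _ _)
  have hvf : (v : EReal) < lapAbsc f := lt_of_lt_of_le hvM (min_le_right _ _)
  obtain ⟨_, ⟨x, hx, rfl⟩, hux⟩ := lt_sSup_iff.mp huA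
  obtain ⟨_, ⟨y, hy, rfl⟩, hvy⟩ := lt_sSup_iff.mp hvg
  obtain ⟨_, ⟨z, hz, rfl⟩, hvz⟩ := lt_sSup_iff.mp hvf
  rw [EReal.coe_lt_coe_iff] at hux hvy hvz
  -- choose a + b = μ with a ∈ lapSet f, b ∈ lapSet g ∩ lapSet f
  obtain ⟨a, b, hab, haf, hbg, hbf⟩ :
      ∃ a b : ℝ, a + b = μ ∧ a ∈ lapSet f ∧ b ∈ lapSet g ∧ b ∈ lapSet f := by
    set m := min y z with hm
    have hm_pos : 0 < m := lt_min hy.1 hz.1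
    have hμxm : μ < x + m := by
      have : u + v < x + m := add_lt_add hux (lt_min hvy hvz)
      linarith
    rcases le_or_gt μ m with hcase | hcase
    · refine ⟨μ / 2, μ / 2, by ring, ?_, ?_, ?_⟩
      · exact lapSet_down hf_nonneg hCf hz (by linarith) (by linarith [min_le_right y z])
      · exact lapSet_down hg_nonneg hCg hy (by linarith) (by linarith [min_le_left y z])
      · exact lapSet_down hf_nonneg hCf hz (by linarith) (by linarith [min_le_right y z])
    · refine ⟨μ - m, m, by ring, ?_, ?_, ?_⟩
      · exact lapSet_down hf_nonneg hCf hx (by linarith) (by linarith)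
      · exact lapSet_down hg_nonneg hCg hy hm_pos (min_le_left y z)
      · exact lapSet_down hf_nonneg hCf hz hm_pos (min_le_right y z)
  obtain ⟨ha_pos, hFa⟩ := haf
  obtain ⟨hb_pos, hGb⟩ := hbg
  obtain ⟨_, hFb⟩ := hbf
  -- the exponentially tilted functions and their convolution
  set F : ℝ → ℝ := fun τ => f τ * Real.exp (b * τ) with hF
  set G : ℝ → ℝ := fun τ => g τ * Real.exp (b * τ) with hG
  have hConv : Integrable (fun s => ∫ τ, F τ * G (s - τ)) := by
    have h := hFb.integrable_convolution (ContinuousLinearMap.mul ℝ ℝ) hGb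
    refine h.congr (Filter.Eventually.of_forall fun s => ?_)
    simp [convolution_def, ContinuousLinearMap.mul_apply']
  set Conv : ℝ → ℝ := fun s => ∫ τ, F τ * G (s - τ) with hConvDef
  have hConv_nonneg : ∀ s, 0 ≤ Conv s := fun s =>
    integral_nonneg fun τ => mul_nonneg (mul_nonneg (hf_nonneg τ) (Real.exp_pos _).le)
      (mul_nonneg (hg_nonneg _) (Real.exp_pos _).le)
  -- pointwise identity relating the tilted convolution to the original one
  have hid : ∀ s, Real.exp (b * s) * (∫ τ, g (s - τ) * f τ) = Conv s := by
    intro s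
    rw [hConvDef, ← MeasureTheory.integral_const_mul]
    refine integral_congr_ae (Filter.Eventually.of_forall fun τ => ?_)
    show Real.exp (b * s) * (g (s - τ) * f τ) = f τ * Real.exp (b * τ) * (g (s - τ) * Real.exp (b * (s - τ)))
    rw [show b * s = b * τ + b * (s - τ) by ring, Real.exp_add]
    ring
  -- the decay bound for f
  set K := (∫ t, f t * Real.exp (a * t)) * Real.exp a with hK
  have hKb : ∀ s, f s * Real.exp (a * s) ≤ K := decay_bound hf_nonneg hf_anti ha_pos hFa
  -- rewrite the target
  have hid2 : ∀ s, (f s * Real.exp (a * s)) * Conv s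
      = f s * (∫ τ, g (s - τ) * f τ) * Real.exp (μ * s) := by
    intro s
    rw [← hid s, ← hab, show (a + b) * s = a * s + b * s by ring, Real.exp_add]
    ring
  refine (Integrable.mono' (hConv.const_mul K) ?_ ?_).congr
    (Filter.Eventually.of_forall hid2)
  · exact ((aesm_of_lap hFa).mul
      (by continuity : Continuous fun s : ℝ => Real.exp (a * s)).aestronglyMeasurable).mul
      hConv.aestronglyMeasurable
  · refine Filter.Eventually.of_forall fun s => ?_
    rw [Real.norm_eq_abs, abs_of_nonneg (mul_nonneg
      (mul_nonneg (hf_nonneg s) (Real.exp_pos _).le) (hConv_nonneg s))]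
    exact mul_le_mul_of_nonneg_right (hKb s) (hConv_nonneg s)

end
end

section
/- There exists a unique λ_* ∈ I such that inf_{λ>0} G(λ) = min_{λ∈I} G(λ) = G(λ_*) > κ⁺𝔪. Moreover, G is strictly decreasing on (0, λ_*] and strictly increasing on I \ (0, λ_*] (the latter interval may be empty). -/
open MeasureTheory Real Set Filter
open Topology

noncomputable section

/-- `G(λ) = (κ⁺ A(λ) - m)/λ` where `A(λ) = ∫ a(s) e^{λ s} ds`. -/
def Gfun (κp m : ℝ) (a : ℝ → ℝ) (l : ℝ) : ℝ :=
  (κp * (∫ s, a s * Real.exp (l * s)) - m) / l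

namespace UMG

variable {κp m : ℝ} {a : ℝ → ℝ}

lemma exp_meas (l : ℝ) (ha_int : Integrable a) :
    AEStronglyMeasurable (fun s => a s * Real.exp (l * s)) volume :=
  ha_int.1.mul (Real.continuous_exp.comp (continuous_const.mul continuous_id)).aestronglyMeasurable

lemma lapSet_down (ha_int : Integrable a) (ha_nonneg : ∀ s, 0 ≤ a s)
    {l l' : ℝ} (hl : l ∈ lapSet a) (h0 : 0 < l') (hle : l' ≤ l) : l' ∈ lapSet a := by
  refine ⟨h0, (hl.2.add ha_int).mono' (exp_meas l' ha_int) (Eventually.of_forall fun s => ?_)⟩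
  have hnn : 0 ≤ a s * Real.exp (l' * s) := mul_nonneg (ha_nonneg s) (Real.exp_pos _).le
  rw [Real.norm_eq_abs, abs_of_nonneg hnn]
  show a s * Real.exp (l' * s) ≤ a s * Real.exp (l * s) + a s
  have : Real.exp (l' * s) ≤ Real.exp (l * s) + 1 := by
    rcases le_or_gt 0 s with hs | hs
    · exact le_add_of_le_of_nonneg (Real.exp_le_exp.2 (mul_le_mul_of_nonneg_right hle hs)) one_pos.le
    · have h1 : l' * s ≤ 0 := mul_nonpos_of_nonneg_of_nonpos h0.le hs.le
      have := Real.exp_le_one_iff.2 h1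
      linarith [Real.exp_pos (l * s)]
  nlinarith [ha_nonneg s, Real.exp_pos (l' * s)]

/-- Jensen-type pointwise lower bound for `G`. -/
lemma G_lower (hm : 0 < m) (hκ : m < κp) (ha_int : Integrable a) (ha_nonneg : ∀ s, 0 ≤ a s)
    (ha_one : (∫ s, a s) = 1) (ha_mom : Integrable (fun s => s * a s))
    {l : ℝ} (hl : l ∈ lapSet a) :
    κp * (∫ s, s * a s) + (κp - m) / l ≤ Gfun κp m a l := by
  have hl0 := hl.1
  have hA : (1 : ℝ) + l * ∫ s, s * a s ≤ ∫ s, a s * Real.exp (l * s) := by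
    have hint : Integrable (fun s => a s + l * (s * a s)) := ha_int.add (ha_mom.const_mul l)
    have h1 : ∫ s, (a s + l * (s * a s)) = 1 + l * ∫ s, s * a s := by
      rw [integral_add ha_int (ha_mom.const_mul l), integral_const_mul, ha_one]
    rw [← h1]
    refine integral_mono hint hl.2 fun s => ?_
    have := Real.add_one_le_exp (l * s)
    nlinarith [ha_nonneg s]
  have key : (κp * (1 + l * ∫ s, s * a s) - m) / l ≤ Gfun κp m a l := by
    unfold Gfun
    gcongr
    linarith
  have heq : (κp * (1 + l * ∫ s, s * a s) - m) / l
      = κp * (∫ s, s * a s) + (κp - m) / l := by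
    field_simp
    ring
  rw [heq] at key
  linarith

/-- Strict convexity of the Laplace transform of `a`. -/
lemma A_strictConvex (ha_int : Integrable a) (ha_nonneg : ∀ s, 0 ≤ a s)
    (ha_nondeg : ∃ r ≥ (0:ℝ), ∃ ρ₀ > (0:ℝ), ∃ δ₀ > (0:ℝ),
      ∀ᵐ s ∂(volume : Measure ℝ), s ∈ Set.Icc (r - δ₀) (r + δ₀) → ρ₀ ≤ a s)
    {l₁ l₃ β : ℝ} (h1 : l₁ ∈ lapSet a) (h3 : l₃ ∈ lapSet a) (h13 : l₁ < l₃)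
    (hβ0 : 0 < β) (hβ1 : β < 1) :
    ∫ s, a s * Real.exp ((β * l₁ + (1 - β) * l₃) * s)
      < β * (∫ s, a s * Real.exp (l₁ * s)) + (1 - β) * ∫ s, a s * Real.exp (l₃ * s) := by
  set l₂ := β * l₁ + (1 - β) * l₃ with hl₂def
  have hl₂pos : 0 < l₂ := by nlinarith [h1.1, h3.1]
  have hl₂mem : l₂ ∈ lapSet a := by
    refine lapSet_down ha_int ha_nonneg h3 hl₂pos ?_
    nlinarith
  set g : ℝ → ℝ := fun s => β * (a s * Real.exp (l₁ * s)) + (1 - β) * (a s * Real.exp (l₃ * s))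
      - a s * Real.exp (l₂ * s) with hgdef
  have hg_int : Integrable g := ((h1.2.const_mul β).add (h3.2.const_mul (1 - β))).sub hl₂mem.2
  have hg_nonneg : ∀ s, 0 ≤ g s := by
    intro s
    have key : Real.exp (l₂ * s) ≤ β * Real.exp (l₁ * s) + (1 - β) * Real.exp (l₃ * s) := by
      have h := convexOn_exp.2 (mem_univ (l₁ * s)) (mem_univ (l₃ * s)) hβ0.le
        (by linarith : (0:ℝ) ≤ 1 - β) (by ring : β + (1 - β) = (1:ℝ))
      rw [smul_eq_mul, smul_eq_mul, smul_eq_mul, smul_eq_mul] at h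
      have he : β * (l₁ * s) + (1 - β) * (l₃ * s) = l₂ * s := by rw [hl₂def]; ring
      rwa [he] at h
    have := mul_le_mul_of_nonneg_left key (ha_nonneg s)
    simp only [hgdef]
    nlinarith
  obtain ⟨r, hr, ρ₀, hρ, δ₀, hδ, hae⟩ := ha_nondeg
  have ht : volume {s : ℝ | ¬ (s ∈ Set.Icc (r - δ₀) (r + δ₀) → ρ₀ ≤ a s)} = 0 := ae_iff.1 hae
  set t := {s : ℝ | ¬ (s ∈ Set.Icc (r - δ₀) (r + δ₀) → ρ₀ ≤ a s)}
  set E : Set ℝ := Set.Icc (r - δ₀) (r + δ₀) \ {0}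
  have hEsub : E \ t ⊆ Function.support g := by
    intro s hs
    obtain ⟨⟨hsIcc, hs0⟩, hst⟩ := hs
    have hps : ρ₀ ≤ a s := by
      by_contra hcon
      exact hst (fun h => absurd h (fun h' => hcon (h' hsIcc)) : s ∈ t)
    have hsne : (s : ℝ) ≠ 0 := by simpa using hs0
    have hxy : l₁ * s ≠ l₃ * s := by
      intro h
      exact hsne (by
        have : (l₃ - l₁) * s = 0 := by linarith [h]
        rcases mul_eq_zero.1 this with h' | h'
        · exact absurd h' (by linarith)
        · exact h')
    have key : Real.exp (l₂ * s) < β * Real.exp (l₁ * s) + (1 - β) * Real.exp (l₃ * s) := by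
      have h := strictConvexOn_exp.2 (mem_univ (l₁ * s)) (mem_univ (l₃ * s)) hxy hβ0
        (by linarith : (0:ℝ) < 1 - β) (by ring : β + (1 - β) = (1:ℝ))
      rw [smul_eq_mul, smul_eq_mul, smul_eq_mul, smul_eq_mul] at h
      have he : β * (l₁ * s) + (1 - β) * (l₃ * s) = l₂ * s := by rw [hl₂def]; ring
      rwa [he] at h
    have hapos : 0 < a s := lt_of_lt_of_le hρ hps
    have : 0 < g s := by
      simp only [hgdef]
      nlinarith
    exact Function.mem_support.2 (ne_of_gt this)
  have hEt : volume (E \ t) = volume E := measure_diff_null ht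
  have hEvol : volume E = ENNReal.ofReal (2 * δ₀) := by
    have h0 : volume ({0} : Set ℝ) = 0 := Real.volume_singleton
    rw [measure_diff_null h0, Real.volume_Icc]
    congr 1
    ring
  have hsupp : 0 < volume (Function.support g) := by
    refine lt_of_lt_of_le ?_ (measure_mono hEsub)
    rw [hEt, hEvol]
    exact ENNReal.ofReal_pos.2 (by linarith)
  have hpos : 0 < ∫ s, g s :=
    (integral_pos_iff_support_of_nonneg_ae (Eventually.of_forall hg_nonneg) hg_int).2 hsupp
  have hsplit : ∫ s, g s = β * (∫ s, a s * Real.exp (l₁ * s))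
      + (1 - β) * (∫ s, a s * Real.exp (l₃ * s)) - ∫ s, a s * Real.exp (l₂ * s) := by
    have hi1 : Integrable (fun s => β * (a s * Real.exp (l₁ * s))
        + (1 - β) * (a s * Real.exp (l₃ * s))) :=
      (h1.2.const_mul β).add (h3.2.const_mul (1 - β))
    simp only [hgdef]
    rw [integral_sub hi1 hl₂mem.2,
      integral_add (h1.2.const_mul β) (h3.2.const_mul (1 - β)), integral_const_mul,
      integral_const_mul]
  linarith

lemma alg_identity (b l₁ l₂ l₃ A₁ A₃ κp m : ℝ) (h1 : l₁ ≠ 0) (h2 : l₂ ≠ 0) (h3 : l₃ ≠ 0) :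
    (κp * (b * A₁ + (1 - b) * A₃) - m) / l₂
      = (b * l₁ / l₂) * ((κp * A₁ - m) / l₁) + ((1 - b) * l₃ / l₂) * ((κp * A₃ - m) / l₃) := by
  field_simp
  ring

/-- Three-point strict quasiconvexity of `G`. -/
lemma three_point (hm : 0 < m) (hκp : 0 < κp) (ha_int : Integrable a) (ha_nonneg : ∀ s, 0 ≤ a s)
    (ha_nondeg : ∃ r ≥ (0:ℝ), ∃ ρ₀ > (0:ℝ), ∃ δ₀ > (0:ℝ),
      ∀ᵐ s ∂(volume : Measure ℝ), s ∈ Set.Icc (r - δ₀) (r + δ₀) → ρ₀ ≤ a s)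
    {l₁ l₂ l₃ : ℝ} (h1 : 0 < l₁) (h12 : l₁ < l₂) (h23 : l₂ < l₃) (h3 : l₃ ∈ lapSet a) :
    Gfun κp m a l₂ < max (Gfun κp m a l₁) (Gfun κp m a l₃) := by
  have hl1 : l₁ ∈ lapSet a := lapSet_down ha_int ha_nonneg h3 h1 (by linarith)
  set β : ℝ := (l₃ - l₂) / (l₃ - l₁) with hβdef
  have hβ0 : 0 < β := div_pos (by linarith) (by linarith)
  have hβ1 : β < 1 := by
    rw [hβdef, div_lt_one (by linarith)]
    linarith
  have h31 : l₃ - l₁ ≠ 0 := sub_ne_zero.2 (by linarith)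
  have hβl : β * l₁ + (1 - β) * l₃ = l₂ := by
    rw [hβdef]
    field_simp
    ring
  have hA := A_strictConvex ha_int ha_nonneg ha_nondeg hl1 h3 (by linarith : l₁ < l₃) hβ0 hβ1
  rw [hβl] at hA
  set A₁ := ∫ s, a s * Real.exp (l₁ * s)
  set A₂ := ∫ s, a s * Real.exp (l₂ * s)
  set A₃ := ∫ s, a s * Real.exp (l₃ * s)
  have h2pos : (0:ℝ) < l₂ := by linarith
  have hstep1 : Gfun κp m a l₂ < (κp * (β * A₁ + (1 - β) * A₃) - m) / l₂ := by
    unfold Gfun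
    gcongr
  have hstep2 : (κp * (β * A₁ + (1 - β) * A₃) - m) / l₂
      = (β * l₁ / l₂) * Gfun κp m a l₁ + ((1 - β) * l₃ / l₂) * Gfun κp m a l₃ :=
    alg_identity β l₁ l₂ l₃ A₁ A₃ κp m (ne_of_gt h1) (ne_of_gt h2pos)
      (ne_of_gt (by linarith : (0:ℝ) < l₃))
  set M := max (Gfun κp m a l₁) (Gfun κp m a l₃) with hMdef
  have hc1 : 0 < β * l₁ / l₂ := by positivity
  have hc2 : 0 < (1 - β) * l₃ / l₂ := by
    have : (0:ℝ) < 1 - β := by linarith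
    have : (0:ℝ) < l₃ := by linarith
    positivity
  have hcsum : β * l₁ / l₂ + (1 - β) * l₃ / l₂ = 1 := by
    rw [← add_div, hβl]
    exact div_self (ne_of_gt h2pos)
  have hfin : (β * l₁ / l₂) * Gfun κp m a l₁ + ((1 - β) * l₃ / l₂) * Gfun κp m a l₃ ≤ M := by
    calc (β * l₁ / l₂) * Gfun κp m a l₁ + ((1 - β) * l₃ / l₂) * Gfun κp m a l₃
        ≤ (β * l₁ / l₂) * M + ((1 - β) * l₃ / l₂) * M := by
          have hM1 : Gfun κp m a l₁ ≤ M := le_max_left _ _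
          have hM3 : Gfun κp m a l₃ ≤ M := le_max_right _ _
          have p1 := mul_le_mul_of_nonneg_left hM1 hc1.le
          have p3 := mul_le_mul_of_nonneg_left hM3 hc2.le
          linarith
    _ = M := by rw [← add_mul, hcsum, one_mul]
  rw [hstep2] at hstep1
  exact lt_of_lt_of_le hstep1 hfin

lemma quad_le_exp {x : ℝ} (hx : 0 ≤ x) : x ^ 2 / 4 ≤ Real.exp x := by
  have h1 := Real.add_one_le_exp (x / 2)
  have h2 : Real.exp (x / 2) * Real.exp (x / 2) = Real.exp x := by
    rw [← Real.exp_add]; ring_nf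
  nlinarith [Real.exp_pos (x / 2)]

lemma G_contOn (ha_int : Integrable a) (ha_nonneg : ∀ s, 0 ≤ a s)
    {ε b : ℝ} (hε : 0 < ε) (hb : b ∈ lapSet a) (hεb : ε ≤ b) :
    ContinuousOn (Gfun κp m a) (Set.Icc ε b) := by
  have hA : ContinuousOn (fun l => ∫ s, a s * Real.exp (l * s)) (Set.Icc ε b) := by
    intro x₀ hx₀
    apply continuousWithinAt_of_dominated (bound := fun s => a s * Real.exp (b * s) + a s)
    · exact Eventually.of_forall fun x => exp_meas x ha_int
    · refine Filter.eventually_of_mem self_mem_nhdsWithin fun x hx => ?_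
      refine Eventually.of_forall fun s => ?_
      have hx1 : 0 < x := lt_of_lt_of_le hε hx.1
      have hx2 : x ≤ b := hx.2
      rw [Real.norm_eq_abs, abs_of_nonneg (mul_nonneg (ha_nonneg s) (Real.exp_pos _).le)]
      have hexp : Real.exp (x * s) ≤ Real.exp (b * s) + 1 := by
        rcases le_or_gt 0 s with hs | hs
        · exact le_add_of_le_of_nonneg
            (Real.exp_le_exp.2 (mul_le_mul_of_nonneg_right hx2 hs)) one_pos.le
        · have h1 : x * s ≤ 0 := mul_nonpos_of_nonneg_of_nonpos hx1.le hs.le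
          have := Real.exp_le_one_iff.2 h1
          linarith [Real.exp_pos (b * s)]
      nlinarith [ha_nonneg s, Real.exp_pos (x * s)]
    · exact hb.2.add ha_int
    · refine Eventually.of_forall fun s => Continuous.continuousWithinAt ?_
      exact continuous_const.mul (Real.continuous_exp.comp (continuous_id.mul continuous_const))
  intro x hx
  have hx0 : x ≠ 0 := ne_of_gt (lt_of_lt_of_le hε hx.1)
  exact (((hA x hx).const_smul κp).sub continuousWithinAt_const).div continuousWithinAt_id hx0

lemma A_growth (ha_int : Integrable a) (ha_nonneg : ∀ s, 0 ≤ a s)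
    {r ρ₀ δ₀ : ℝ} (hr : 0 ≤ r) (hρ : 0 < ρ₀) (hδ : 0 < δ₀)
    (hae : ∀ᵐ s ∂(volume : Measure ℝ), s ∈ Set.Icc (r - δ₀) (r + δ₀) → ρ₀ ≤ a s)
    {l : ℝ} (hl : l ∈ lapSet a) :
    ρ₀ * (δ₀ / 2) * Real.exp (l * (δ₀ / 2)) ≤ ∫ s, a s * Real.exp (l * s) := by
  set J := Set.Icc (r + δ₀ / 2) (r + δ₀) with hJdef
  have hJm : MeasurableSet J := measurableSet_Icc
  have hJfin : volume J < ⊤ := measure_Icc_lt_top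
  have h1 : ∫ _ in J, (ρ₀ * Real.exp (l * (r + δ₀ / 2))) ≤ ∫ s in J, a s * Real.exp (l * s) := by
    apply setIntegral_mono_on_ae (integrableOn_const hJfin.ne) hl.2.integrableOn hJm
    filter_upwards [hae] with s hs hsJ
    have hsIcc : s ∈ Set.Icc (r - δ₀) (r + δ₀) := ⟨by linarith [hsJ.1], hsJ.2⟩
    have hρa := hs hsIcc
    have hexp : Real.exp (l * (r + δ₀ / 2)) ≤ Real.exp (l * s) :=
      Real.exp_le_exp.2 (mul_le_mul_of_nonneg_left hsJ.1 hl.1.le)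
    nlinarith [Real.exp_pos (l * (r + δ₀ / 2))]
  have h2 : ∫ s in J, a s * Real.exp (l * s) ≤ ∫ s, a s * Real.exp (l * s) :=
    setIntegral_le_integral hl.2
      (Eventually.of_forall fun s => mul_nonneg (ha_nonneg s) (Real.exp_pos _).le)
  have h3 : ∫ _ in J, (ρ₀ * Real.exp (l * (r + δ₀ / 2)) : ℝ)
      = (δ₀ / 2) * (ρ₀ * Real.exp (l * (r + δ₀ / 2))) := by
    rw [setIntegral_const, hJdef, measureReal_def, Real.volume_Icc, smul_eq_mul]
    congr 1
    rw [ENNReal.toReal_ofReal (by linarith)]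
    ring
  have h4 : ρ₀ * (δ₀ / 2) * Real.exp (l * (δ₀ / 2))
      ≤ (δ₀ / 2) * (ρ₀ * Real.exp (l * (r + δ₀ / 2))) := by
    have hexp : Real.exp (l * (δ₀ / 2)) ≤ Real.exp (l * (r + δ₀ / 2)) :=
      Real.exp_le_exp.2 (by nlinarith [hl.1])
    have hkey := mul_le_mul_of_nonneg_left hexp (by positivity : (0:ℝ) ≤ ρ₀ * (δ₀ / 2))
    nlinarith [hkey]
  linarith

lemma A_shift (ha_int : Integrable a) (ha_nonneg : ∀ s, 0 ≤ a s) (ha_one : (∫ s, a s) = 1)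
    {b l : ℝ} (hb : b ∈ lapSet a) (hl : l ∈ lapSet a) (hble : b ≤ l) :
    (∫ s, a s * Real.exp (b * s)) - 1 ≤ ∫ s, a s * Real.exp (l * s) := by
  have hsplit : (∫ s in Set.Iio (0:ℝ), a s * Real.exp (b * s))
      + ∫ s in Set.Ici (0:ℝ), a s * Real.exp (b * s) = ∫ s, a s * Real.exp (b * s) := by
    have := integral_add_compl (measurableSet_Iio (a := (0:ℝ))) hb.2
    rwa [compl_Iio] at this
  have hIio : ∫ s in Set.Iio (0:ℝ), a s * Real.exp (b * s) ≤ 1 := by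
    calc ∫ s in Set.Iio (0:ℝ), a s * Real.exp (b * s) ≤ ∫ s in Set.Iio (0:ℝ), a s := by
          apply setIntegral_mono_on hb.2.integrableOn ha_int.integrableOn measurableSet_Iio
          intro s hs
          have hle : Real.exp (b * s) ≤ 1 :=
            Real.exp_le_one_iff.2 (mul_nonpos_of_nonneg_of_nonpos hb.1.le (le_of_lt hs))
          nlinarith [ha_nonneg s, Real.exp_pos (b * s)]
      _ ≤ ∫ s, a s := setIntegral_le_integral ha_int (Eventually.of_forall ha_nonneg)
      _ = 1 := ha_one
  have hmono : ∫ s in Set.Ici (0:ℝ), a s * Real.exp (b * s)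
      ≤ ∫ s in Set.Ici (0:ℝ), a s * Real.exp (l * s) := by
    apply setIntegral_mono_on hb.2.integrableOn hl.2.integrableOn measurableSet_Ici
    intro s hs
    have hle : Real.exp (b * s) ≤ Real.exp (l * s) :=
      Real.exp_le_exp.2 (mul_le_mul_of_nonneg_right hble hs)
    nlinarith [ha_nonneg s]
  have hIci : ∫ s in Set.Ici (0:ℝ), a s * Real.exp (l * s) ≤ ∫ s, a s * Real.exp (l * s) :=
    setIntegral_le_integral hl.2
      (Eventually.of_forall fun s => mul_nonneg (ha_nonneg s) (Real.exp_pos _).le)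
  linarith

lemma A_unbounded (ha_int : Integrable a) (ha_nonneg : ∀ s, 0 ≤ a s)
    (hne : (lapSet a).Nonempty) (hBdd : BddAbove (lapSet a))
    (hσS : sSup (lapSet a) ∉ lapSet a) (M : ℝ) :
    ∃ l ∈ lapSet a, M < ∫ s, a s * Real.exp (l * s) := by
  by_contra hcon
  push_neg at hcon
  set σ := sSup (lapSet a) with hσdef
  obtain ⟨l₀, hl₀⟩ := hne
  have hσpos : 0 < σ := lt_of_lt_of_le hl₀.1 (le_csSup hBdd hl₀)
  have hmem : ∀ x : ℝ, 0 < x → x < σ → x ∈ lapSet a := by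
    intro x hx0 hxσ
    obtain ⟨u, huS, hxu⟩ := exists_lt_of_lt_csSup ⟨l₀, hl₀⟩ hxσ
    exact lapSet_down ha_int ha_nonneg huS hx0 hxu.le
  set f : ℝ → ℝ := fun s => a s * Real.exp (σ * s) with hfdef
  set ln : ℕ → ℝ := fun n => σ * (1 - ((n:ℝ) + 2)⁻¹) with hlndef
  have hinv : ∀ n : ℕ, 0 < ((n:ℝ) + 2)⁻¹ ∧ ((n:ℝ) + 2)⁻¹ < 1 := by
    intro n
    constructor
    · positivity
    · rw [inv_lt_one_iff₀]
      right
      have : (0:ℝ) ≤ (n:ℕ) := Nat.cast_nonneg n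
      push_cast
      linarith
  have hln_mem : ∀ n, ln n ∈ lapSet a := by
    intro n
    obtain ⟨hi0, hi1⟩ := hinv n
    refine hmem _ ?_ ?_
    · have : (0:ℝ) < 1 - ((n:ℝ) + 2)⁻¹ := by linarith
      exact mul_pos hσpos this
    · show σ * (1 - ((n:ℝ) + 2)⁻¹) < σ
      nlinarith
  have hlnt : Tendsto ln atTop (𝓝 σ) := by
    have h2 : Tendsto (fun n : ℕ => ((n:ℝ) + 2)) atTop atTop :=
      tendsto_atTop_add_const_right atTop 2 tendsto_natCast_atTop_atTop
    have h3 : Tendsto (fun n : ℕ => ((n:ℝ) + 2)⁻¹) atTop (𝓝 0) := h2.inv_tendsto_atTop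
    have h4 : Tendsto (fun n : ℕ => σ * ((1:ℝ) - ((n:ℝ) + 2)⁻¹)) atTop (𝓝 (σ * (1 - 0))) :=
      (Tendsto.const_mul σ (Tendsto.sub tendsto_const_nhds h3))
    simpa using h4
  have hf_meas : AEStronglyMeasurable f volume := exp_meas σ ha_int
  have hIio : IntegrableOn f (Set.Iio (0:ℝ)) := by
    apply Integrable.mono' ha_int.integrableOn hf_meas.restrict
    filter_upwards [ae_restrict_mem measurableSet_Iio] with s hs
    rw [Real.norm_eq_abs, abs_of_nonneg (mul_nonneg (ha_nonneg s) (Real.exp_pos _).le)]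
    have hle : Real.exp (σ * s) ≤ 1 :=
      Real.exp_le_one_iff.2 (mul_nonpos_of_nonneg_of_nonpos hσpos.le (le_of_lt hs))
    nlinarith [ha_nonneg s, Real.exp_pos (σ * s)]
  have hIci : IntegrableOn f (Set.Ici (0:ℝ)) := by
    refine ⟨hf_meas.restrict, ?_⟩
    rw [hasFiniteIntegral_iff_ofReal (ae_restrict_of_ae (Eventually.of_forall
      fun s => mul_nonneg (ha_nonneg s) (Real.exp_pos _).le))]
    have key : ∫⁻ s in Set.Ici (0:ℝ), ENNReal.ofReal (f s) ≤ ENNReal.ofReal M := by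
      have hle : ∫⁻ s in Set.Ici (0:ℝ), ENNReal.ofReal (f s)
          ≤ ∫⁻ s in Set.Ici (0:ℝ),
              Filter.liminf (fun n => ENNReal.ofReal (a s * Real.exp (ln n * s))) atTop := by
        apply lintegral_mono_ae
        filter_upwards [ae_restrict_mem measurableSet_Ici] with s _
        have htend : Tendsto (fun n : ℕ => ENNReal.ofReal (a s * Real.exp (ln n * s))) atTop
            (𝓝 (ENNReal.ofReal (f s))) := by
          apply ENNReal.tendsto_ofReal
          exact ((Real.continuous_exp.tendsto (σ * s)).comp (hlnt.mul_const s)).const_mul (a s)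
        rw [htend.liminf_eq]
      refine hle.trans ?_
      have hmeasn : ∀ n : ℕ, AEMeasurable (fun s => ENNReal.ofReal (a s * Real.exp (ln n * s)))
          (volume.restrict (Set.Ici (0:ℝ))) := fun n =>
        ((exp_meas (ln n) ha_int).aemeasurable.restrict).ennreal_ofReal
      refine (lintegral_liminf_le' hmeasn).trans ?_
      have hn : ∀ n : ℕ, ∫⁻ s in Set.Ici (0:ℝ), ENNReal.ofReal (a s * Real.exp (ln n * s))
          ≤ ENNReal.ofReal M := by
        intro n
        calc ∫⁻ s in Set.Ici (0:ℝ), ENNReal.ofReal (a s * Real.exp (ln n * s))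
            ≤ ∫⁻ s, ENNReal.ofReal (a s * Real.exp (ln n * s)) := setLIntegral_le_lintegral _ _
          _ = ENNReal.ofReal (∫ s, a s * Real.exp (ln n * s)) :=
              (ofReal_integral_eq_lintegral_ofReal (hln_mem n).2 (Eventually.of_forall
                fun s => mul_nonneg (ha_nonneg s) (Real.exp_pos _).le)).symm
          _ ≤ ENNReal.ofReal M := ENNReal.ofReal_le_ofReal (hcon _ (hln_mem n))
      calc Filter.liminf (fun n => ∫⁻ s in Set.Ici (0:ℝ),
              ENNReal.ofReal (a s * Real.exp (ln n * s))) atTop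
          ≤ Filter.liminf (fun _ : ℕ => ENNReal.ofReal M) atTop :=
            Filter.liminf_le_liminf (Eventually.of_forall hn)
        _ = ENNReal.ofReal M := Filter.liminf_const _
    exact lt_of_le_of_lt key ENNReal.ofReal_lt_top
  have hf_int : Integrable f := by
    have hu := hIio.union hIci
    rw [Set.Iio_union_Ici] at hu
    exact integrableOn_univ.mp hu
  exact hσS ⟨hσpos, hf_int⟩

lemma exists_right (hm : 0 < m) (hκ : m < κp) (ha_int : Integrable a)
    (ha_nonneg : ∀ s, 0 ≤ a s) (ha_one : (∫ s, a s) = 1)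
    (ha_nondeg : ∃ r ≥ (0:ℝ), ∃ ρ₀ > (0:ℝ), ∃ δ₀ > (0:ℝ),
      ∀ᵐ s ∂(volume : Measure ℝ), s ∈ Set.Icc (r - δ₀) (r + δ₀) → ρ₀ ≤ a s)
    {l₀ : ℝ} (hl₀ : l₀ ∈ lapSet a) :
    ∃ b ∈ lapSet a, l₀ ≤ b ∧ ∀ l ∈ lapSet a, b < l → Gfun κp m a l₀ ≤ Gfun κp m a l := by
  obtain ⟨r, hr, ρ₀, hρ, δ₀, hδ, hae⟩ := ha_nondeg
  have hκ0 : 0 < κp := lt_trans hm hκ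
  set M := Gfun κp m a l₀ with hMdef
  by_cases hBdd : BddAbove (lapSet a)
  · by_cases hσS : sSup (lapSet a) ∈ lapSet a
    · exact ⟨sSup (lapSet a), hσS, le_csSup hBdd hl₀,
        fun l hl hlt => absurd (le_csSup hBdd hl) (not_le.2 hlt)⟩
    · set σ := sSup (lapSet a) with hσdef
      have hσpos : 0 < σ := lt_of_lt_of_le hl₀.1 (le_csSup hBdd hl₀)
      obtain ⟨b', hb'S, hb'⟩ := A_unbounded ha_int ha_nonneg ⟨l₀, hl₀⟩ hBdd hσS
        (2 + (m + σ * |M|) / κp)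
      set b := max b' l₀ with hbdef
      have hbS : b ∈ lapSet a := by
        rcases max_choice b' l₀ with h | h <;> rw [hbdef, h]
        exacts [hb'S, hl₀]
      refine ⟨b, hbS, le_max_right _ _, ?_⟩
      intro l hl hbl
      have h1 := A_shift ha_int ha_nonneg ha_one hb'S hbS (le_max_left _ _)
      have h2 := A_shift ha_int ha_nonneg ha_one hbS hl (le_of_lt hbl)
      have hlσ : l ≤ σ := le_csSup hBdd hl
      have hAl : (m + σ * |M|) / κp < ∫ s, a s * Real.exp (l * s) := by linarith
      have h3 : σ * |M| < κp * (∫ s, a s * Real.exp (l * s)) - m := by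
        have := (div_lt_iff₀ hκ0).1 hAl
        nlinarith
      have h4 : |M| ≤ Gfun κp m a l := by
        unfold Gfun
        rw [le_div_iff₀ hl.1]
        have hp := mul_le_mul_of_nonneg_left hlσ (abs_nonneg M)
        nlinarith
      linarith [le_abs_self M]
  · set d : ℝ := δ₀ / 2 with hddef
    have hd : 0 < d := by rw [hddef]; linarith
    set K : ℝ := κp * (ρ₀ * d) * d ^ 2 / 4 with hKdef
    have hK : 0 < K := by rw [hKdef]; positivity
    set b₀ : ℝ := max l₀ (max 1 ((|M| + m) / K)) with hb₀def
    obtain ⟨u, huS, hub⟩ : ∃ u ∈ lapSet a, b₀ < u := by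
      by_contra hcon
      push_neg at hcon
      exact hBdd ⟨b₀, fun x hx => hcon x hx⟩
    have hb₀pos : 0 < b₀ := lt_of_lt_of_le hl₀.1 (le_max_left _ _)
    have hbS : b₀ ∈ lapSet a := lapSet_down ha_int ha_nonneg huS hb₀pos hub.le
    refine ⟨b₀, hbS, le_max_left _ _, ?_⟩
    intro l hl hbl
    have hgrow := A_growth ha_int ha_nonneg hr hρ hδ hae hl
    have hexp : (l * d) ^ 2 / 4 ≤ Real.exp (l * d) :=
      quad_le_exp (mul_nonneg hl.1.le hd.le)
    have hAl' : K * l ^ 2 ≤ κp * ∫ s, a s * Real.exp (l * s) := by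
      have hc : K * l ^ 2 = κp * (ρ₀ * d * ((l * d) ^ 2 / 4)) := by rw [hKdef]; ring
      rw [hc]
      have step : ρ₀ * d * ((l * d) ^ 2 / 4) ≤ ∫ s, a s * Real.exp (l * s) := by
        have := mul_le_mul_of_nonneg_left hexp (by positivity : (0:ℝ) ≤ ρ₀ * d)
        calc ρ₀ * d * ((l * d) ^ 2 / 4) ≤ ρ₀ * d * Real.exp (l * d) := this
          _ ≤ ∫ s, a s * Real.exp (l * s) := hgrow
      exact mul_le_mul_of_nonneg_left step hκ0.le
    have hl1 : 1 ≤ l :=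
      le_trans (le_trans (le_max_left _ _) (le_max_right l₀ _)) hbl.le
    have hlK : (|M| + m) / K ≤ l :=
      le_trans (le_trans (le_max_right _ _) (le_max_right l₀ _)) hbl.le
    have hKl : |M| + m ≤ K * l := by
      have := (div_le_iff₀ hK).1 hlK
      nlinarith
    have hfin : M ≤ Gfun κp m a l := by
      unfold Gfun
      rw [le_div_iff₀ hl.1]
      have p1 := mul_le_mul_of_nonneg_right hKl hl.1.le
      have p2 := mul_le_mul_of_nonneg_right (le_abs_self M) hl.1.le
      have p3 : m * 1 ≤ m * l := mul_le_mul_of_nonneg_left hl1 hm.le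
      nlinarith
    exact hfin

end UMG

/-- there is a unique `λ_* ∈ I` minimizing `G` over `I` (hence over all
`λ > 0`, as `G = ∞` off `I`), the minimal value exceeds `κ⁺𝔪`, and `G` is strictly
decreasing on `(0, λ_*]` and strictly increasing on `I \ (0, λ_*]`. -/
theorem unique_minimizer_of_G
    (κp m : ℝ) (hm : 0 < m) (hκ : m < κp)
    (a : ℝ → ℝ) (ha_int : Integrable a) (ha_nonneg : ∀ s, 0 ≤ a s)
    (ha_one : (∫ s, a s) = 1) (ha_bdd : ∃ C, ∀ s, a s ≤ C)
    (ha_mom : Integrable (fun s => s * a s))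
    (ha_absc : (lapSet a).Nonempty)
    (ha_nondeg : ∃ r ≥ (0:ℝ), ∃ ρ₀ > (0:ℝ), ∃ δ₀ > (0:ℝ),
      ∀ᵐ s ∂(volume : Measure ℝ), s ∈ Set.Icc (r - δ₀) (r + δ₀) → ρ₀ ≤ a s) :
    ∃! lstar : ℝ, lstar ∈ lapSet a ∧
      (∀ l ∈ lapSet a, Gfun κp m a lstar ≤ Gfun κp m a l) ∧
      κp * (∫ s, s * a s) < Gfun κp m a lstar ∧
      StrictAntiOn (Gfun κp m a) (Set.Ioc 0 lstar) ∧
      StrictMonoOn (Gfun κp m a) (lapSet a \ Set.Ioc 0 lstar) := by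
  classical
  have hκ0 : 0 < κp := lt_trans hm hκ
  obtain ⟨l₀, hl₀⟩ := ha_absc
  obtain ⟨b, hbS, hl₀b, hright⟩ :=
    UMG.exists_right hm hκ ha_int ha_nonneg ha_one ha_nondeg hl₀
  set mm := ∫ s, s * a s with hmmdef
  set M := Gfun κp m a l₀ with hMdef
  have hMlow : κp * mm + (κp - m) / l₀ ≤ M :=
    UMG.G_lower hm hκ ha_int ha_nonneg ha_one ha_mom hl₀
  have hMgt : κp * mm < M := by
    have := div_pos (by linarith : (0:ℝ) < κp - m) hl₀.1
    linarith
  have hMm : 0 < M - κp * mm := by linarith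
  set ε : ℝ := min l₀ ((κp - m) / (M - κp * mm)) with hεdef
  have hε0 : 0 < ε := lt_min hl₀.1 (div_pos (by linarith) hMm)
  have hεl₀ : ε ≤ l₀ := min_le_left _ _
  have hεb : ε ≤ b := le_trans hεl₀ hl₀b
  have hsub : Set.Icc ε b ⊆ lapSet a := fun x hx =>
    UMG.lapSet_down ha_int ha_nonneg hbS (lt_of_lt_of_le hε0 hx.1) hx.2
  have hsmall : ∀ l ∈ lapSet a, l < ε → M ≤ Gfun κp m a l := by
    intro l hlS hlε
    have hlow := UMG.G_lower hm hκ ha_int ha_nonneg ha_one ha_mom hlS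
    have h1 : (κp - m) / ε ≤ (κp - m) / l :=
      div_le_div_of_nonneg_left (by linarith) hlS.1 hlε.le
    have h2 : M - κp * mm ≤ (κp - m) / ε := by
      have hεle : ε ≤ (κp - m) / (M - κp * mm) := min_le_right _ _
      have hd := div_le_div_of_nonneg_left (show (0:ℝ) ≤ κp - m by linarith) hε0 hεle
      have hcc : (κp - m) / ((κp - m) / (M - κp * mm)) = M - κp * mm := by
        have hne1 : κp - m ≠ 0 := by linarith
        have hne2 : M - κp * mm ≠ 0 := ne_of_gt hMm
        field_simp
      linarith
    linarith
  have hcont := UMG.G_contOn (κp := κp) (m := m) ha_int ha_nonneg hε0 hbS hεb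
  obtain ⟨lstar, hlstarIcc, hlstarmin'⟩ :=
    isCompact_Icc.exists_isMinOn (Set.nonempty_Icc.2 hεb) hcont
  have hlstarmin := isMinOn_iff.1 hlstarmin'
  have hlstarS : lstar ∈ lapSet a := hsub hlstarIcc
  have hl₀Icc : l₀ ∈ Set.Icc ε b := ⟨hεl₀, hl₀b⟩
  have hminM : Gfun κp m a lstar ≤ M := hlstarmin l₀ hl₀Icc
  have hglobal : ∀ l ∈ lapSet a, Gfun κp m a lstar ≤ Gfun κp m a l := by
    intro l hlS
    rcases lt_or_ge l ε with h | h
    · exact le_trans hminM (hsmall l hlS h)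
    · rcases le_or_gt l b with h' | h'
      · exact hlstarmin l ⟨h, h'⟩
      · exact le_trans hminM (hright l hlS h')
  have htp : ∀ {x y z : ℝ}, 0 < x → x < y → y < z → z ∈ lapSet a →
      Gfun κp m a y < max (Gfun κp m a x) (Gfun κp m a z) :=
    fun hx hxy hyz hz => UMG.three_point hm hκ0 ha_int ha_nonneg ha_nondeg hx hxy hyz hz
  have hlt : ∀ y ∈ lapSet a, y ≠ lstar → Gfun κp m a lstar < Gfun κp m a y := by
    intro y hyS hyne
    rcases lt_or_eq_of_le (hglobal y hyS) with h | h
    · exact h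
    · exfalso
      rcases lt_or_gt_of_ne hyne with hlt' | hlt'
      · set t := (y + lstar) / 2 with htdef
        have h1 : y < t := by rw [htdef]; linarith
        have h2 : t < lstar := by rw [htdef]; linarith
        have htS : t ∈ lapSet a :=
          UMG.lapSet_down ha_int ha_nonneg hlstarS (by linarith [hyS.1]) h2.le
        have hc := htp hyS.1 h1 h2 hlstarS
        rw [← h, max_self] at hc
        exact absurd (hglobal t htS) (not_le.2 hc)
      · set t := (lstar + y) / 2 with htdef
        have h1 : lstar < t := by rw [htdef]; linarith
        have h2 : t < y := by rw [htdef]; linarith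
        have htS : t ∈ lapSet a :=
          UMG.lapSet_down ha_int ha_nonneg hyS (by linarith [hlstarS.1]) h2.le
        have hc := htp hlstarS.1 h1 h2 hyS
        rw [← h, max_self] at hc
        exact absurd (hglobal t htS) (not_le.2 hc)
  refine ⟨lstar, ⟨hlstarS, hglobal, ?_, ?_, ?_⟩, ?_⟩
  · have hlow := UMG.G_lower hm hκ ha_int ha_nonneg ha_one ha_mom hlstarS
    have := div_pos (show (0:ℝ) < κp - m by linarith) hlstarS.1
    linarith
  · intro x hx y hy hxy
    have hxS : x ∈ lapSet a := UMG.lapSet_down ha_int ha_nonneg hlstarS hx.1 hx.2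
    rcases lt_or_eq_of_le hy.2 with h | h
    · have hc := htp hx.1 hxy h hlstarS
      rwa [max_eq_left (hglobal x hxS)] at hc
    · rw [h]
      exact hlt x hxS (ne_of_lt (h ▸ hxy))
  · intro x hx y hy hxy
    have hxS := hx.1
    have hyS := hy.1
    have hxgt : lstar < x := by
      by_contra hc
      push_neg at hc
      exact hx.2 ⟨hxS.1, hc⟩
    have hc := htp hlstarS.1 hxgt hxy hyS
    rwa [max_eq_right (hglobal y hyS)] at hc
  · rintro y ⟨hyS, hymin, -, -, -⟩
    by_contra hyne
    have h1 := hglobal y hyS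
    have h2 := hymin lstar hlstarS
    have h3 := hlt y hyS hyne
    linarith


end
end

section
/- Assume additionally that σ < ∞ and A(σ) < ∞. Then G'(λ) < 0 for all λ ∈ (0, σ) if and only if the integral T(σ) := κ⁺∫_ℝ (1 − σs)a(s)e^{σs} ds converges to a finite value and m ≤ T(σ) (in which case automatically 0 < T(σ) < κ⁺). -/
open MeasureTheory Real Set Filter

noncomputable section

open ProbabilityTheory
open scoped Topology

/-
`G'(λ) = (m - κ⁺ T(λ)) / λ²` with `T(λ) = A(λ) - λ A'(λ) = ∫ (1 - λ s) a(s) e^{λ s} ds`, so the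
sign of `G'` is governed by `T`. For each `s ≠ 0` the map `λ ↦ (1 - λ s) e^{λ s}` is strictly
decreasing on `[0, ∞)` (its derivative is `-λ s² e^{λ s}`), hence `T` is strictly decreasing on
`[0, σ]` and `G' < 0` on `(0, σ)` as soon as `m ≤ κ⁺ T(σ)`. Conversely, if `m < κ⁺ T(λ)` for all
`λ < σ`, Fatou's lemma applied to the nonnegative functions `(1 - (1 - λ s) e^{λ s}) a(s)` makes
`T(σ)` finite, and monotone convergence gives `m ≤ κ⁺ T(σ)`. Finally `T(σ) < T(0) = 1`.
Viewing `a(s) ds` as a measure `μ`, `A` is the moment generating function of `μ`.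
-/

section Density

variable {α : Type*} [MeasurableSpace α] {ν : Measure α} {a : α → ℝ}

lemma integral_withDensity_ofReal (ha : AEMeasurable a ν) (ha₀ : ∀ x, 0 ≤ a x) (g : α → ℝ) :
    ∫ x, g x ∂ν.withDensity (fun x => ENNReal.ofReal (a x)) = ∫ x, a x * g x ∂ν := by
  refine (integral_withDensity_eq_integral_smul₀ ha.real_toNNReal g).trans ?_
  simp only [NNReal.smul_def, Real.coe_toNNReal _ (ha₀ _), smul_eq_mul]

lemma integrable_withDensity_ofReal_iff (ha : AEMeasurable a ν) (ha₀ : ∀ x, 0 ≤ a x)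
    {g : α → ℝ} :
    Integrable g (ν.withDensity fun x => ENNReal.ofReal (a x)) ↔
      Integrable (fun x => a x * g x) ν := by
  refine (integrable_withDensity_iff_integrable_smul₀ ha.real_toNNReal).trans ?_
  simp only [NNReal.smul_def, Real.coe_toNNReal _ (ha₀ _), smul_eq_mul]

end Density

lemma strictAntiOn_one_sub_mul_mul_exp {s : ℝ} (hs : s ≠ 0) :
    StrictAntiOn (fun l => (1 - l * s) * exp (l * s)) (Ici 0) := by
  refine strictAntiOn_of_deriv_neg (convex_Ici 0) (by fun_prop) fun l hl => ?_
  rw [interior_Ici] at hl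
  have hderiv : HasDerivAt (fun l => (1 - l * s) * exp (l * s)) (-(l * s ^ 2 * exp (l * s))) l := by
    have hlin : HasDerivAt (fun l => l * s) s l := by simpa using (hasDerivAt_id l).mul_const s
    exact ((hlin.const_sub 1).mul hlin.exp).congr_deriv (by ring)
  rw [hderiv.deriv, neg_lt_zero]
  exact mul_pos (mul_pos hl ((pow_pos (abs_pos.2 hs) 2).trans_eq (sq_abs s))) (exp_pos _)

lemma antitoneOn_one_sub_mul_mul_exp (s : ℝ) :
    AntitoneOn (fun l => (1 - l * s) * exp (l * s)) (Ici 0) := by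
  rcases eq_or_ne s 0 with rfl | hs
  · simpa using antitoneOn_const
  · exact (strictAntiOn_one_sub_mul_mul_exp hs).antitoneOn


section TangentIntercept

variable {μ : Measure ℝ}

/-- The value at `0` of the tangent line to `mgf id μ` at `l`, i.e. `A(l) - l A'(l)`. -/
def tangentIntercept (μ : Measure ℝ) (l : ℝ) : ℝ :=
  ∫ s, (1 - l * s) * exp (l * s) ∂μ

lemma Ioo_subset_interior_integrableExpSet {Ω : Type*} [MeasurableSpace Ω] {X : Ω → ℝ}
    {ν : Measure Ω} {u v : ℝ} (hu : u ∈ integrableExpSet X ν) (hv : v ∈ integrableExpSet X ν) :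
    Ioo u v ⊆ interior (integrableExpSet X ν) := by
  rw [← interior_Icc]
  exact interior_mono (convex_integrableExpSet.ordConnected.out hu hv)

lemma integrable_one_sub_mul_mul_exp {l : ℝ} (hl : l ∈ interior (integrableExpSet id μ)) :
    Integrable (fun s => (1 - l * s) * exp (l * s)) μ := by
  have hexp : Integrable (fun s => exp (l * s)) μ := interior_subset (a := l) hl
  have hmul := integrable_pow_mul_exp_of_mem_interior_integrableExpSet hl 1
  refine (hexp.sub (hmul.const_mul l)).congr (ae_of_all _ fun s => ?_)
  simp only [Pi.sub_apply, id, pow_one]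
  ring

lemma tangentIntercept_eq {l : ℝ} (hl : l ∈ interior (integrableExpSet id μ)) :
    tangentIntercept μ l = mgf id μ l - l * μ[fun s => s * exp (l * s)] := by
  have hexp : Integrable (fun s => exp (l * s)) μ := interior_subset (a := l) hl
  have hmul := integrable_pow_mul_exp_of_mem_interior_integrableExpSet hl 1
  simp only [id, pow_one] at hmul
  simp only [tangentIntercept, mgf, id]
  rw [← integral_const_mul, ← integral_sub hexp (hmul.const_mul l)]
  congr 1 with s
  ring

lemma hasDerivAt_mgf_sub_div {κ m l : ℝ} (hl : l ∈ interior (integrableExpSet id μ))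
    (hl₀ : l ≠ 0) :
    HasDerivAt (fun l => (κ * mgf id μ l - m) / l) ((m - κ * tangentIntercept μ l) / l ^ 2) l := by
  refine ((((hasDerivAt_mgf hl).const_mul κ).sub_const m).div (hasDerivAt_id l) hl₀).congr_deriv ?_
  rw [tangentIntercept_eq hl]
  simp only [id]
  congr 1
  ring

lemma tangentIntercept_lt {l₁ l₂ : ℝ} (h₀ : 0 ≤ l₁) (h₁₂ : l₁ < l₂) (hμ : μ {0}ᶜ ≠ 0)
    (hi₁ : Integrable (fun s => (1 - l₁ * s) * exp (l₁ * s)) μ)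
    (hi₂ : Integrable (fun s => (1 - l₂ * s) * exp (l₂ * s)) μ) :
    tangentIntercept μ l₂ < tangentIntercept μ l₁ := by
  rw [tangentIntercept, tangentIntercept, ← sub_pos, ← integral_sub hi₁ hi₂]
  refine (integral_pos_iff_support_of_nonneg (f := fun s => _ - _) ?_ (hi₁.sub hi₂)).2 ?_
  · exact fun s => sub_nonneg.2 (antitoneOn_one_sub_mul_mul_exp s h₀ (h₀.trans h₁₂.le) h₁₂.le)
  · refine (pos_iff_ne_zero.2 hμ).trans_le (measure_mono fun s hs => ?_)
    exact (sub_pos.2 (strictAntiOn_one_sub_mul_mul_exp hs h₀ (h₀.trans h₁₂.le) h₁₂)).ne'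

lemma integrable_and_le_tangentIntercept [IsFiniteMeasure μ] {σ c : ℝ} (hσ : 0 < σ)
    (hint : ∀ l ∈ Ioo 0 σ, Integrable (fun s => (1 - l * s) * exp (l * s)) μ)
    (hc : ∀ l ∈ Ioo 0 σ, c ≤ tangentIntercept μ l) :
    Integrable (fun s => (1 - σ * s) * exp (σ * s)) μ ∧ c ≤ tangentIntercept μ σ := by
  set f : ℝ → ℝ → ℝ := fun l s => (1 - l * s) * exp (l * s) with hf
  obtain ⟨L, hL_mono, hL_mem, hL_lim⟩ := exists_seq_strictMono_tendsto' hσ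
  have hf_lim (s : ℝ) : Tendsto (fun n => f (L n) s) atTop (𝓝 (f σ s)) :=
    ((show Continuous fun l => f l s by fun_prop).tendsto σ).comp hL_lim
  have hf_anti (s : ℝ) : Antitone fun n => f (L n) s := fun i j hij =>
    antitoneOn_one_sub_mul_mul_exp s (hL_mem i).1.le (hL_mem j).1.le (hL_mono.monotone hij)
  have hf_zero : f 0 = 1 := by ext s; simp [hf]
  have hf_zero_int : Integrable (f 0) μ := hf_zero ▸ integrable_const 1
  -- Fatou's lemma: the nonnegative functions `f 0 - f (L n)` have integrals `≤ μ univ - c`.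
  have hgap : Integrable (fun s => f 0 s - f σ s) μ := by
    refine integrable_of_tendsto (G := fun n s => f 0 s - f (L n) s)
      (ae_of_all _ fun s => tendsto_const_nhds.sub (hf_lim s))
      (fun n => (by fun_prop : Continuous fun s => f 0 s - f (L n) s).aestronglyMeasurable)
      (ne_top_of_le_ne_top (ENNReal.ofReal_ne_top (r := μ.real univ - c))
        (liminf_le_of_frequently_le' (Frequently.of_forall fun n => ?_)))
    have hint_n : Integrable (fun s => f 0 s - f (L n) s) μ :=
      hf_zero_int.sub (hint _ (hL_mem n))
    have hnonneg (s : ℝ) : 0 ≤ f 0 s - f (L n) s := sub_nonneg.2 <|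
      antitoneOn_one_sub_mul_mul_exp s (mem_Ici.2 le_rfl) (hL_mem n).1.le (hL_mem n).1.le
    rw [← ofReal_integral_norm_eq_lintegral_enorm hint_n]
    refine ENNReal.ofReal_le_ofReal ?_
    simp only [Real.norm_of_nonneg (hnonneg _)]
    rw [integral_sub hf_zero_int (hint _ (hL_mem n)), hf_zero]
    simp only [Pi.one_apply, integral_const, smul_eq_mul, mul_one]
    have hcn := hc _ (hL_mem n)
    rw [tangentIntercept] at hcn
    linarith
  have hσint : Integrable (f σ) μ :=
    (hf_zero_int.sub hgap).congr (ae_of_all _ fun s => sub_sub_cancel _ _)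
  have hT_lim : Tendsto (fun n => tangentIntercept μ (L n)) atTop (𝓝 (tangentIntercept μ σ)) :=
    integral_tendsto_of_tendsto_of_antitone (fun n => hint _ (hL_mem n)) hσint
      (ae_of_all _ hf_anti) (ae_of_all _ hf_lim)
  exact ⟨hσint, ge_of_tendsto' hT_lim fun n => hc _ (hL_mem n)⟩

theorem forall_deriv_mgf_sub_div_neg_iff [IsFiniteMeasure μ] {κ m σ : ℝ} (hκ : 0 < κ) (hσ : 0 < σ)
    (hσμ : σ ∈ integrableExpSet id μ) (hμ : μ {0}ᶜ ≠ 0) :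
    (∀ l ∈ Ioo 0 σ, deriv (fun l => (κ * mgf id μ l - m) / l) l < 0) ↔
      Integrable (fun s => (1 - σ * s) * exp (σ * s)) μ ∧ m ≤ κ * tangentIntercept μ σ := by
  have hinterior : Ioo 0 σ ⊆ interior (integrableExpSet id μ) :=
    Ioo_subset_interior_integrableExpSet (by simp [integrableExpSet]) hσμ
  have hint (l : ℝ) (hl : l ∈ Ioo 0 σ) := integrable_one_sub_mul_mul_exp (hinterior hl)
  have hderiv_neg (l : ℝ) (hl : l ∈ Ioo 0 σ) :
      deriv (fun l => (κ * mgf id μ l - m) / l) l < 0 ↔ m < κ * tangentIntercept μ l := by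
    rw [(hasDerivAt_mgf_sub_div (hinterior hl) hl.1.ne').deriv,
      div_lt_iff₀ (pow_pos hl.1 2), zero_mul, sub_neg]
  constructor
  · intro h
    have := integrable_and_le_tangentIntercept (c := m / κ) hσ hint fun l hl =>
      (div_le_iff₀' hκ).2 ((hderiv_neg l hl).1 (h l hl)).le
    exact ⟨this.1, (div_le_iff₀' hκ).1 this.2⟩
  · rintro ⟨hσint, hm⟩ l hl
    refine (hderiv_neg l hl).2 (hm.trans_lt ?_)
    exact mul_lt_mul_of_pos_left (tangentIntercept_lt hl.1.le hl.2 hμ (hint l hl) hσint) hκ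

end TangentIntercept

theorem Gprime_neg_iff_general
    (κp m : ℝ) (hm : 0 < m) (hκ : m < κp)
    (a : ℝ → ℝ) (ha_int : Integrable a) (ha_nonneg : ∀ s, 0 ≤ a s)
    (ha_one : (∫ s, a s) = 1)
    (σ : ℝ) (hσ_pos : 0 < σ)
    (hAσ : Integrable fun s => a s * Real.exp (σ * s)) :
    ((∀ l ∈ Set.Ioo (0:ℝ) σ, deriv (Gfun κp m a) l < 0) ↔
      (Integrable (fun s => (1 - σ * s) * a s * Real.exp (σ * s)) ∧
        m ≤ κp * ∫ s, (1 - σ * s) * a s * Real.exp (σ * s))) ∧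
    ((∀ l ∈ Set.Ioo (0:ℝ) σ, deriv (Gfun κp m a) l < 0) →
      0 < κp * (∫ s, (1 - σ * s) * a s * Real.exp (σ * s)) ∧
      κp * (∫ s, (1 - σ * s) * a s * Real.exp (σ * s)) < κp) := by
  set μ := volume.withDensity fun s => ENNReal.ofReal (a s)
  have : IsFiniteMeasure μ := isFiniteMeasure_withDensity_ofReal ha_int.2
  have h_integral (g : ℝ → ℝ) : ∫ s, g s ∂μ = ∫ s, a s * g s :=
    integral_withDensity_ofReal ha_int.aemeasurable ha_nonneg g
  have h_integrable (g : ℝ → ℝ) : Integrable g μ ↔ Integrable fun s => a s * g s :=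
    integrable_withDensity_ofReal_iff ha_int.aemeasurable ha_nonneg
  have hμ_univ : μ.real univ = 1 := by simpa [ha_one] using h_integral 1
  have hμ_ne : μ {0}ᶜ ≠ 0 := by
    intro h
    have hμ_zero : μ univ = 0 := by
      refine le_antisymm ((measure_univ_le_add_compl {0}).trans ?_) zero_le
      rw [withDensity_absolutelyContinuous _ _ Real.volume_singleton, h, add_zero]
    simp [measureReal_def, hμ_zero] at hμ_univ
  have hG : Gfun κp m a = fun l => (κp * mgf id μ l - m) / l := by
    ext l; simp [Gfun, mgf, h_integral]
  have hT_eq : (fun s => (1 - σ * s) * a s * exp (σ * s)) =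
      fun s => a s * ((1 - σ * s) * exp (σ * s)) := by
    ext s; ring
  have hiff := forall_deriv_mgf_sub_div_neg_iff (m := m) (hm.trans hκ) hσ_pos ((h_integrable _).2 hAσ) hμ_ne
  rw [hG, hT_eq, ← h_integrable, ← h_integral, ← tangentIntercept]
  refine ⟨hiff, fun hneg => ?_⟩
  obtain ⟨hint, hle⟩ := hiff.1 hneg
  have hT_lt : tangentIntercept μ σ < 1 := by
    simpa [tangentIntercept, hμ_univ] using
      tangentIntercept_lt le_rfl hσ_pos hμ_ne (by simp) hint
  exact ⟨by linarith, by nlinarith⟩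

/-- assuming the abscissa `σ` of `a` is finite with `A(σ) < ∞`,
`G' < 0` on all of `(0,σ)` iff `T(σ) := κ⁺∫(1 - σ s) a(s) e^{σ s} ds` converges
to a finite value and `m ≤ T(σ)`; in that case automatically `0 < T(σ) < κ⁺`. -/
theorem Gprime_neg_iff
    (κp m : ℝ) (hm : 0 < m) (hκ : m < κp)
    (a : ℝ → ℝ) (ha_int : Integrable a) (ha_nonneg : ∀ s, 0 ≤ a s)
    (ha_one : (∫ s, a s) = 1) (ha_bdd : ∃ C, ∀ s, a s ≤ C)
    (ha_mom : Integrable (fun s => s * a s))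
    (ha_nondeg : ∃ r ≥ (0:ℝ), ∃ ρ₀ > (0:ℝ), ∃ δ₀ > (0:ℝ),
      ∀ᵐ s ∂(volume : Measure ℝ), s ∈ Set.Icc (r - δ₀) (r + δ₀) → ρ₀ ≤ a s)
    (σ : ℝ) (hσ_pos : 0 < σ) (hσ_lub : IsLUB (lapSet a) σ)
    (hAσ : Integrable fun s => a s * Real.exp (σ * s)) :
    ((∀ l ∈ Set.Ioo (0:ℝ) σ, deriv (Gfun κp m a) l < 0) ↔
      (Integrable (fun s => (1 - σ * s) * a s * Real.exp (σ * s)) ∧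
        m ≤ κp * ∫ s, (1 - σ * s) * a s * Real.exp (σ * s))) ∧
    ((∀ l ∈ Set.Ioo (0:ℝ) σ, deriv (Gfun κp m a) l < 0) →
      0 < κp * (∫ s, (1 - σ * s) * a s * Real.exp (σ * s)) ∧
      κp * (∫ s, (1 - σ * s) * a s * Real.exp (σ * s)) < κp) :=
  Gprime_neg_iff_general κp m hm hκ a ha_int ha_nonneg ha_one σ hσ_pos hAσ

end
end

section
/- Let ψ be a traveling-wave profile with speed c. Then for every z ∈ ℂ with 0 < Re z < min{σ(a⁺), σ(ψ)}, all the Laplace transforms below converge absolutely and c·z·(𝓛ψ)(z) = κ⁺(𝓛a⁺)(z)(𝓛ψ)(z) − m(𝓛ψ)(z) − κ_l(𝓛(ψ²))(z) − κ_{nl}(𝓛(ψ·(a⁻*ψ)))(z). -/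
open MeasureTheory Real Set Filter

noncomputable section

def KernelHyp (κp m κl κnl θ : ℝ) (ap an : ℝ → ℝ) : Prop :=
  0 < m ∧ m < κp ∧ 0 ≤ κl ∧ 0 ≤ κnl ∧ 0 < κl + κnl ∧ θ = (κp - m) / (κl + κnl) ∧
  Integrable ap ∧ (∀ s, 0 ≤ ap s) ∧ (∫ s, ap s) = 1 ∧
  Integrable an ∧ (∀ s, 0 ≤ an s) ∧ (∫ s, an s) = 1 ∧
  (∃ C, ∀ s, ap s ≤ C) ∧
  (∀ᵐ s ∂(volume : Measure ℝ), κnl * θ * an s ≤ κp * ap s) ∧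
  (∃ μ > (0:ℝ), Integrable (fun s => ap s * Real.exp (μ * s))) ∧
  (∃ r ≥ (0:ℝ), ∃ ρ₀ > (0:ℝ), ∃ δ₀ > (0:ℝ),
    ∀ᵐ s ∂(volume : Measure ℝ), s ∈ Set.Icc (r - δ₀) (r + δ₀) → ρ₀ ≤ ap s) ∧
  Integrable (fun s => |s| * ap s)

def IsTW (κp m κl κnl θ : ℝ) (ap an : ℝ → ℝ) (c : ℝ) (ψ : ℝ → ℝ) : Prop :=
  (∀ s, ψ s ∈ Set.Icc (0 : ℝ) θ) ∧ Antitone ψ ∧ ContDiff ℝ 1 ψ ∧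
  (∃ C, ∀ s, |deriv ψ s| ≤ C) ∧
  Tendsto ψ atBot (nhds θ) ∧ Tendsto ψ atTop (nhds 0) ∧
  (∃ μ₀ > (0:ℝ), Integrable (fun s => ψ s * Real.exp (μ₀ * s))) ∧
  ∀ s, c * deriv ψ s + κp * (∫ τ, ap (s - τ) * ψ τ) - m * ψ s
      - κnl * ψ s * (∫ τ, an (s - τ) * ψ τ) - κl * (ψ s) ^ 2 = 0

lemma integrableOn_exp_mul_Iic' {x : ℝ} (hx : 0 < x) (c : ℝ) :
    IntegrableOn (fun s : ℝ => Real.exp (x * s)) (Iic c) := by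
  refine integrableOn_Iic_of_intervalIntegral_norm_bounded (Real.exp (x * c) / x) c
    (fun y => ((continuous_exp.comp (continuous_const.mul continuous_id)).intervalIntegrable y c).1)
    tendsto_id (Eventually.of_forall fun y => ?_)
  have h1 : (∫ s in y..c, ‖Real.exp (x * s)‖) = ∫ s in y..c, Real.exp (x * s) := by
    congr 1; ext s; exact Real.norm_of_nonneg (Real.exp_pos _).le
  rw [h1, intervalIntegral.integral_comp_mul_left (fun u => Real.exp u) hx.ne', integral_exp,
    smul_eq_mul, div_eq_inv_mul]
  have h2 : (0:ℝ) ≤ x⁻¹ := by positivity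
  nlinarith [Real.exp_pos (x * y)]

lemma exp_mul_le {x l s : ℝ} (hx : 0 ≤ x) (hxl : x ≤ l) :
    Real.exp (x * s) ≤ Real.exp (l * s) + 1 := by
  rcases le_or_gt 0 s with h | h
  · have : x * s ≤ l * s := mul_le_mul_of_nonneg_right hxl h
    have := Real.exp_le_exp.2 this
    linarith
  · have : x * s ≤ 0 := mul_nonpos_of_nonneg_of_nonpos hx h.le
    have h1 : Real.exp (x * s) ≤ 1 := Real.exp_le_one_iff.2 this
    have := Real.exp_pos (l * s)
    linarith

/-- complex integrability from real absolute integrability. -/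
lemma cInt {h : ℝ → ℝ} {z : ℂ}
    (hi : Integrable (fun s => h s * Real.exp (z.re * s))) :
    Integrable (fun s => (h s : ℂ) * Complex.exp (z * s)) := by
  have h1 : AEStronglyMeasurable h volume := by
    have h2 : AEStronglyMeasurable
        (fun s => (h s * Real.exp (z.re * s)) * Real.exp (-(z.re * s))) volume :=
      hi.aestronglyMeasurable.mul
        ((continuous_exp.comp (continuous_const.mul continuous_id).neg).aestronglyMeasurable)
    refine h2.congr (Eventually.of_forall fun s => ?_)
    simp only []
    rw [mul_assoc, ← Real.exp_add]
    simp
  have hm : AEStronglyMeasurable (fun s : ℝ => (h s : ℂ) * Complex.exp (z * s)) volume := by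
    refine (Complex.continuous_ofReal.comp_aestronglyMeasurable h1).mul
      ((Complex.continuous_exp.comp
        (continuous_const.mul Complex.continuous_ofReal)).aestronglyMeasurable)
  refine hi.norm.mono' hm (Eventually.of_forall fun s => ?_)
  have hre : (z * (s:ℂ)).re = z.re * s := by simp [Complex.mul_re]
  rw [norm_mul, Complex.norm_exp, hre, Complex.norm_real,
    Real.norm_eq_abs, Real.norm_eq_abs, abs_mul, Real.abs_exp]

/-- the shear `(s, τ) ↦ (s - τ, τ)` as a measurable equivalence. -/
def subEquiv : ℝ × ℝ ≃ᵐ ℝ × ℝ where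
  toEquiv := ⟨fun p => (p.1 - p.2, p.2), fun p => (p.1 + p.2, p.2),
    fun p => by simp, fun p => by simp⟩
  measurable_toFun := (measurable_fst.sub measurable_snd).prodMk measurable_snd
  measurable_invFun := (measurable_fst.add measurable_snd).prodMk measurable_snd

lemma subEquiv_apply (p : ℝ × ℝ) : subEquiv p = (p.1 - p.2, p.2) := rfl

/-- Laplace transform of a convolution-type product: integrability on the product space. -/
lemma conv_prod_integrable {𝕜 : Type*} [RCLike 𝕜] {F G : ℝ → 𝕜} (hF : Integrable F) (hG : Integrable G) :
    Integrable (fun p : ℝ × ℝ => F (p.1 - p.2) * G p.2)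
      ((volume : Measure ℝ).prod volume) := by
  have h1 : Integrable (fun p : ℝ × ℝ => F p.1 * G p.2) ((volume : Measure ℝ).prod volume) :=
    hF.mul_prod hG
  have hT := measurePreserving_sub_prod (volume : Measure ℝ) volume
  have := (hT.integrable_comp_emb (subEquiv.measurableEmbedding)).2 h1
  exact this

/-- a traveling-wave profile `ψ` with speed `c` satisfies, for every
`z` with `0 < Re z < min{σ(a⁺), σ(ψ)}`, the absolutely convergent Laplace-transformed
equation `c z 𝓛ψ(z) = κ⁺ 𝓛a⁺(z) 𝓛ψ(z) - m 𝓛ψ(z) - κ_l 𝓛(ψ²)(z) - κ_{nl} 𝓛(ψ(a⁻*ψ))(z)`. -/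
theorem laplace_equation_for_profile
    (κp m κl κnl θ : ℝ) (ap an : ℝ → ℝ)
    (hker : KernelHyp κp m κl κnl θ ap an)
    (c : ℝ) (ψ : ℝ → ℝ) (hTW : IsTW κp m κl κnl θ ap an c ψ) :
    ∀ z : ℂ, 0 < z.re → (z.re : EReal) < min (lapAbsc ap) (lapAbsc ψ) →
      Integrable (fun s => ap s * Real.exp (z.re * s)) ∧
      Integrable (fun s => ψ s * Real.exp (z.re * s)) ∧
      Integrable (fun s => (ψ s) ^ 2 * Real.exp (z.re * s)) ∧
      Integrable (fun s => ψ s * (∫ τ, an (s - τ) * ψ τ) * Real.exp (z.re * s)) ∧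
      (c : ℂ) * z * (∫ s : ℝ, (ψ s : ℂ) * Complex.exp (z * s)) =
        (κp : ℂ) * (∫ s : ℝ, (ap s : ℂ) * Complex.exp (z * s))
            * (∫ s : ℝ, (ψ s : ℂ) * Complex.exp (z * s))
          - (m : ℂ) * (∫ s : ℝ, (ψ s : ℂ) * Complex.exp (z * s))
          - (κl : ℂ) * (∫ s : ℝ, ((ψ s) ^ 2 : ℂ) * Complex.exp (z * s))
          - (κnl : ℂ) * (∫ s : ℝ,
              ((ψ s * ∫ τ, an (s - τ) * ψ τ : ℝ) : ℂ) * Complex.exp (z * s)) := by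
  obtain ⟨hm0, hmκ, hκl, hκnl, hκsum, hθdef, hapInt, hap0, hap1, hanInt, han0, han1,
    _, _, _, _, _⟩ := hker
  obtain ⟨hψmem, hψanti, hψC1, -, hψbot, hψtop, -, hODE⟩ := hTW
  intro z hz hzlt
  have hθpos : 0 < θ := by
    rw [hθdef]; exact div_pos (by linarith) hκsum
  have hψ0 : ∀ s, 0 ≤ ψ s := fun s => (hψmem s).1
  have hψθ : ∀ s, ψ s ≤ θ := fun s => (hψmem s).2
  have hψcont : Continuous ψ := hψC1.continuous
  rw [lt_min_iff] at hzlt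
  -- extract exponents la, lψ
  obtain ⟨la, ⟨hla_pos, hla_int⟩, hxla⟩ : ∃ l ∈ lapSet ap, (z.re : EReal) < (l : ℝ) := by
    obtain ⟨y, hy, hlt⟩ := lt_sSup_iff.mp hzlt.1
    obtain ⟨l, hl, rfl⟩ := hy
    exact ⟨l, hl, hlt⟩
  obtain ⟨lψ, ⟨hlψ_pos, hlψ_int⟩, hxlψ⟩ : ∃ l ∈ lapSet ψ, (z.re : EReal) < (l : ℝ) := by
    obtain ⟨y, hy, hlt⟩ := lt_sSup_iff.mp hzlt.2
    obtain ⟨l, hl, rfl⟩ := hy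
    exact ⟨l, hl, hlt⟩
  have hxla' : z.re < la := by exact_mod_cast hxla
  have hxlψ' : z.re < lψ := by exact_mod_cast hxlψ
  -- integrability (1): ap
  have ha_x : Integrable (fun s => ap s * Real.exp (z.re * s)) := by
    refine (hla_int.add hapInt).mono'
      (hapInt.aestronglyMeasurable.mul
        ((continuous_exp.comp (continuous_const.mul continuous_id)).aestronglyMeasurable))
      (Eventually.of_forall fun s => ?_)
    simp only [Pi.add_apply]
    rw [Real.norm_eq_abs, abs_mul, abs_of_nonneg (hap0 s), Real.abs_exp]
    have := exp_mul_le (x := z.re) (l := la) hz.le hxla'.le (s := s)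
    nlinarith [hap0 s, Real.exp_pos (z.re * s), Real.exp_pos (la * s)]
  -- integrability (2): ψ
  have hψ_x : Integrable (fun s => ψ s * Real.exp (z.re * s)) := by
    have hmeas : AEStronglyMeasurable (fun s => ψ s * Real.exp (z.re * s)) volume :=
      (hψcont.mul (continuous_exp.comp (continuous_const.mul continuous_id))).aestronglyMeasurable
    rw [← integrableOn_univ, ← Iic_union_Ioi (a := (0:ℝ))]
    refine IntegrableOn.union ?_ ?_
    · refine Integrable.mono' ((integrableOn_exp_mul_Iic' hz 0).const_mul θ)
        hmeas.restrict (Eventually.of_forall fun s => ?_)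
      rw [Real.norm_eq_abs, abs_mul, abs_of_nonneg (hψ0 s), Real.abs_exp]
      exact mul_le_mul_of_nonneg_right (hψθ s) (Real.exp_pos _).le
    · refine Integrable.mono' hlψ_int.integrableOn hmeas.restrict ?_
      refine (ae_restrict_iff' measurableSet_Ioi).2 (Eventually.of_forall fun s hs => ?_)
      rw [Real.norm_eq_abs, abs_mul, abs_of_nonneg (hψ0 s), Real.abs_exp]
      refine mul_le_mul_of_nonneg_left (Real.exp_le_exp.2 ?_) (hψ0 s)
      exact mul_le_mul_of_nonneg_right hxlψ'.le (le_of_lt hs)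
  -- integrability (3): ψ²
  have hQ_x : Integrable (fun s => (ψ s) ^ 2 * Real.exp (z.re * s)) := by
    refine (hψ_x.const_mul θ).mono'
      (((hψcont.pow 2).mul
        (continuous_exp.comp (continuous_const.mul continuous_id))).aestronglyMeasurable)
      (Eventually.of_forall fun s => ?_)
    rw [Real.norm_eq_abs, abs_mul, abs_of_nonneg (pow_nonneg (hψ0 s) 2), Real.abs_exp,
      ← mul_assoc]
    refine mul_le_mul_of_nonneg_right ?_ (Real.exp_pos _).le
    nlinarith [hψ0 s, hψθ s]
  -- convolution with an : basic facts
  have han_shift : ∀ s : ℝ, Integrable (fun τ => an (s - τ)) := fun s =>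
    (integrable_comp_sub_left an s).2 hanInt
  have hconv_int : ∀ s : ℝ, Integrable (fun τ => an (s - τ) * ψ τ) := by
    intro s
    refine ((han_shift s).const_mul θ).mono'
      ((han_shift s).aestronglyMeasurable.mul hψcont.aestronglyMeasurable)
      (Eventually.of_forall fun τ => ?_)
    rw [Real.norm_eq_abs, abs_mul, abs_of_nonneg (han0 _), abs_of_nonneg (hψ0 _)]
    nlinarith [han0 (s - τ), hψ0 τ, hψθ τ]
  have hconv_nonneg : ∀ s : ℝ, 0 ≤ ∫ τ, an (s - τ) * ψ τ := fun s =>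
    integral_nonneg fun τ => mul_nonneg (han0 _) (hψ0 _)
  have hconv_le : ∀ s : ℝ, (∫ τ, an (s - τ) * ψ τ) ≤ θ := by
    intro s
    have h1 : (∫ τ, an (s - τ) * ψ τ) ≤ ∫ τ, θ * an (s - τ) :=
      integral_mono (hconv_int s) ((han_shift s).const_mul θ) (fun τ => by
        nlinarith [han0 (s - τ), hψ0 τ, hψθ τ])
    rw [integral_const_mul, integral_sub_left_eq_self an volume s, han1, mul_one] at h1
    exact h1
  have hconv_meas : AEStronglyMeasurable (fun s => ∫ τ, an (s - τ) * ψ τ) volume := by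
    have hG : AEStronglyMeasurable (fun p : ℝ × ℝ => an (p.1 - p.2) * ψ p.2)
        ((volume : Measure ℝ).prod volume) :=
      (hanInt.aestronglyMeasurable.comp_quasiMeasurePreserving
        (quasiMeasurePreserving_sub volume volume)).mul
        ((hψcont.comp continuous_snd).aestronglyMeasurable)
    exact hG.integral_prod_right'
  -- integrability (4): ψ · (an * ψ)
  have hN_x : Integrable (fun s => ψ s * (∫ τ, an (s - τ) * ψ τ) * Real.exp (z.re * s)) := by
    refine (hψ_x.const_mul θ).mono'
      (((hψcont.aestronglyMeasurable.mul hconv_meas).mul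
        ((continuous_exp.comp (continuous_const.mul continuous_id)).aestronglyMeasurable)))
      (Eventually.of_forall fun s => ?_)
    rw [Real.norm_eq_abs, abs_mul, Real.abs_exp,
      abs_of_nonneg (mul_nonneg (hψ0 s) (hconv_nonneg s)), ← mul_assoc]
    refine mul_le_mul_of_nonneg_right ?_ (Real.exp_pos _).le
    nlinarith [hψ0 s, hψθ s, hconv_nonneg s, hconv_le s]
  refine ⟨ha_x, hψ_x, hQ_x, hN_x, ?_⟩
  -- complex integrability
  have hψC : Integrable (fun s : ℝ => (ψ s : ℂ) * Complex.exp (z * s)) := cInt hψ_x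
  have hapC : Integrable (fun s : ℝ => (ap s : ℂ) * Complex.exp (z * s)) := cInt ha_x
  have hQC : Integrable (fun s : ℝ => ((ψ s ^ 2 : ℝ) : ℂ) * Complex.exp (z * s)) := cInt hQ_x
  have hNC : Integrable (fun s : ℝ =>
      ((ψ s * ∫ τ, an (s - τ) * ψ τ : ℝ) : ℂ) * Complex.exp (z * s)) := cInt hN_x
  -- Laplace transform of the ap-convolution
  have hpt : ∀ s τ : ℝ, (ap (s - τ) * Real.exp (z.re * (s - τ))) * (ψ τ * Real.exp (z.re * τ))
      = (ap (s - τ) * ψ τ) * Real.exp (z.re * s) := by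
    intro s τ
    rw [show (ap (s - τ) * Real.exp (z.re * (s - τ))) * (ψ τ * Real.exp (z.re * τ))
        = (ap (s - τ) * ψ τ) * (Real.exp (z.re * (s - τ)) * Real.exp (z.re * τ)) from by ring,
      ← Real.exp_add]
    congr 2
    ring
  have hconvap_x : Integrable (fun s => (∫ τ, ap (s - τ) * ψ τ) * Real.exp (z.re * s)) := by
    have h1 : Integrable (fun s : ℝ => ∫ τ : ℝ,
        (ap (s - τ) * Real.exp (z.re * (s - τ))) * (ψ τ * Real.exp (z.re * τ))) volume :=
      (conv_prod_integrable ha_x hψ_x).integral_prod_left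
    refine h1.congr (Eventually.of_forall fun s => ?_)
    simp only []
    rw [show (fun τ => (ap (s - τ) * Real.exp (z.re * (s - τ))) * (ψ τ * Real.exp (z.re * τ)))
        = fun τ => (ap (s - τ) * ψ τ) * Real.exp (z.re * s) from funext fun τ => hpt s τ,
      integral_mul_const]
  have hconvapC : Integrable (fun s : ℝ =>
      ((∫ τ, ap (s - τ) * ψ τ : ℝ) : ℂ) * Complex.exp (z * s)) := cInt hconvap_x
  have hprodC : Integrable (fun p : ℝ × ℝ =>
      ((ap (p.1 - p.2) : ℂ) * Complex.exp (z * ((p.1 - p.2 : ℝ) : ℂ)))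
        * ((ψ p.2 : ℂ) * Complex.exp (z * (p.2 : ℂ)))) ((volume : Measure ℝ).prod volume) :=
    conv_prod_integrable hapC hψC
  have hAI : (∫ s : ℝ, ((∫ τ, ap (s - τ) * ψ τ : ℝ) : ℂ) * Complex.exp (z * s))
      = (∫ s : ℝ, (ap s : ℂ) * Complex.exp (z * s))
        * (∫ s : ℝ, (ψ s : ℂ) * Complex.exp (z * s)) := by
    have h2 : (∫ p : ℝ × ℝ, ((ap (p.1 - p.2) : ℂ) * Complex.exp (z * ((p.1 - p.2 : ℝ) : ℂ)))
          * ((ψ p.2 : ℂ) * Complex.exp (z * (p.2 : ℂ))) ∂((volume : Measure ℝ).prod volume))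
        = (∫ s : ℝ, (ap s : ℂ) * Complex.exp (z * s))
          * (∫ s : ℝ, (ψ s : ℂ) * Complex.exp (z * s)) := by
      rw [(measurePreserving_sub_prod (volume : Measure ℝ) volume).integral_comp
        subEquiv.measurableEmbedding
        (fun p : ℝ × ℝ => ((ap p.1 : ℂ) * Complex.exp (z * (p.1 : ℂ)))
          * ((ψ p.2 : ℂ) * Complex.exp (z * (p.2 : ℂ))))]
      exact integral_prod_mul (fun s : ℝ => (ap s : ℂ) * Complex.exp (z * s))
        (fun s : ℝ => (ψ s : ℂ) * Complex.exp (z * s))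
    have h3 := integral_prod _ hprodC
    have h4 : ∀ s : ℝ, (∫ τ : ℝ, ((ap (s - τ) : ℂ) * Complex.exp (z * ((s - τ : ℝ) : ℂ)))
        * ((ψ τ : ℂ) * Complex.exp (z * (τ : ℂ))))
        = ((∫ τ, ap (s - τ) * ψ τ : ℝ) : ℂ) * Complex.exp (z * s) := by
      intro s
      have h5 : (fun τ : ℝ => ((ap (s - τ) : ℂ) * Complex.exp (z * ((s - τ : ℝ) : ℂ)))
          * ((ψ τ : ℂ) * Complex.exp (z * (τ : ℂ))))
          = fun τ : ℝ => ((ap (s - τ) * ψ τ : ℝ) : ℂ) * Complex.exp (z * s) := by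
        funext τ
        rw [show ((ap (s - τ) : ℂ) * Complex.exp (z * ((s - τ : ℝ) : ℂ)))
            * ((ψ τ : ℂ) * Complex.exp (z * (τ : ℂ)))
            = ((ap (s - τ) : ℂ) * (ψ τ : ℂ))
              * (Complex.exp (z * ((s - τ : ℝ) : ℂ)) * Complex.exp (z * (τ : ℂ))) from by ring,
          ← Complex.exp_add]
        push_cast
        rw [show z * ((s : ℂ) - τ) + z * τ = z * s from by ring]
      rw [h5, integral_mul_const]
      congr 1
      exact integral_ofReal
    rw [← h2, h3]
    exact (integral_congr_ae (Eventually.of_forall fun s => h4 s)).symm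
  -- pointwise complex form of the profile equation
  have hψdiff : ∀ s : ℝ, HasDerivAt ψ (deriv ψ s) s := fun s =>
    ((hψC1.differentiable one_ne_zero) s).hasDerivAt
  have hode' : ∀ s : ℝ, (c : ℂ) * (↑(deriv ψ s) : ℂ) * Complex.exp (z * s) =
      ((m : ℂ) * ((ψ s : ℂ) * Complex.exp (z * s))
        + (κnl : ℂ) * (((ψ s * ∫ τ, an (s - τ) * ψ τ : ℝ) : ℂ) * Complex.exp (z * s))
        + (κl : ℂ) * (((ψ s ^ 2 : ℝ) : ℂ) * Complex.exp (z * s)))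
      - (κp : ℂ) * (((∫ τ, ap (s - τ) * ψ τ : ℝ) : ℂ) * Complex.exp (z * s)) := by
    intro s
    have h0 := hODE s
    have h1 : c * deriv ψ s = (m * ψ s + κnl * (ψ s * ∫ τ, an (s - τ) * ψ τ)
        + κl * ψ s ^ 2) - κp * ∫ τ, ap (s - τ) * ψ τ := by linear_combination h0
    calc (c : ℂ) * (↑(deriv ψ s) : ℂ) * Complex.exp (z * s)
        = ((c * deriv ψ s : ℝ) : ℂ) * Complex.exp (z * s) := by push_cast; ring
      _ = _ := by rw [h1]; push_cast; ring
  -- integrability of the two pieces of the derivative of g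
  have hDint1 : Integrable (fun s : ℝ => (c : ℂ) * (↑(deriv ψ s) : ℂ) * Complex.exp (z * s)) := by
    refine Integrable.congr ?_ (Eventually.of_forall fun s => (hode' s).symm)
    exact (((hψC.const_mul (m : ℂ)).add (hNC.const_mul (κnl : ℂ))).add
      (hQC.const_mul (κl : ℂ))).sub (hconvapC.const_mul (κp : ℂ))
  have hDint2 : Integrable (fun s : ℝ =>
      (c : ℂ) * (ψ s : ℂ) * (Complex.exp (z * s) * z)) := by
    refine Integrable.congr ((hψC.const_mul (c : ℂ)).mul_const z)
      (Eventually.of_forall fun s => by ring)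
  -- the function g and its derivative
  have hgderiv : ∀ s : ℝ, HasDerivAt (fun s : ℝ => (c : ℂ) * (ψ s : ℂ) * Complex.exp (z * s))
      ((c : ℂ) * (↑(deriv ψ s) : ℂ) * Complex.exp (z * s)
        + (c : ℂ) * (ψ s : ℂ) * (Complex.exp (z * s) * z)) s := by
    intro s
    have h1 : HasDerivAt (fun s : ℝ => (c : ℂ) * (ψ s : ℂ)) ((c : ℂ) * (↑(deriv ψ s) : ℂ)) s :=
      ((hψdiff s).ofReal_comp).const_mul (c : ℂ)
    have h3 : HasDerivAt (fun s : ℝ => z * (s : ℂ)) z s := by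
      simpa using (Complex.ofRealCLM.hasDerivAt (x := s)).const_mul z
    have h2 : HasDerivAt (fun s : ℝ => Complex.exp (z * s)) (Complex.exp (z * s) * z) s := by
      simpa using h3.cexp
    exact h1.mul h2
  -- norm of g
  have hnorm : ∀ s : ℝ, ‖(c : ℂ) * (ψ s : ℂ) * Complex.exp (z * s)‖
      = |c| * (ψ s * Real.exp (z.re * s)) := by
    intro s
    have hre : (z * (s : ℂ)).re = z.re * s := by simp [Complex.mul_re]
    rw [norm_mul, norm_mul, Complex.norm_real, Complex.norm_real,
      Complex.norm_exp, hre, Real.norm_eq_abs,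
      Real.norm_eq_abs, abs_of_nonneg (hψ0 s)]
    ring
  -- limits of g at ∓∞
  have hgbot : Tendsto (fun s : ℝ => (c : ℂ) * (ψ s : ℂ) * Complex.exp (z * s)) atBot (nhds 0) := by
    have hexp_bot : Tendsto (fun s : ℝ => Real.exp (z.re * s)) atBot (nhds 0) :=
      Real.tendsto_exp_atBot.comp (Tendsto.const_mul_atBot hz tendsto_id)
    refine squeeze_zero_norm (fun s => ?_) (by simpa using hexp_bot.const_mul (|c| * θ))
    rw [hnorm s, ← mul_assoc]
    refine mul_le_mul_of_nonneg_right ?_ (Real.exp_pos _).le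
    exact mul_le_mul_of_nonneg_left (hψθ s) (abs_nonneg c)
  have hψbound : ∀ s : ℝ, ψ s * Real.exp (lψ * s)
      ≤ Real.exp lψ * (∫ t, ψ t * Real.exp (lψ * t)) := by
    intro s
    have hIcc : (volume (Icc (s - 1) s)).toReal = 1 := by
      rw [Real.volume_Icc]
      norm_num
    have h2 : ∫ _ in Icc (s - 1) s, (ψ s * Real.exp (lψ * (s - 1)))
        = ψ s * Real.exp (lψ * (s - 1)) := by
      rw [setIntegral_const, measureReal_def, hIcc, one_smul]
    have h1 : ψ s * Real.exp (lψ * (s - 1)) ≤ ∫ t in Icc (s - 1) s, ψ t * Real.exp (lψ * t) := by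
      rw [← h2]
      refine setIntegral_mono_on ((integrableOn_const_iff (by finiteness)).2 (Or.inr ?_))
        hlψ_int.integrableOn measurableSet_Icc (fun t ht => ?_)
      · rw [Real.volume_Icc]
        exact ENNReal.ofReal_lt_top
      · exact mul_le_mul (hψanti ht.2)
          (Real.exp_le_exp.2 (mul_le_mul_of_nonneg_left ht.1 hlψ_pos.le))
          (Real.exp_pos _).le (hψ0 t)
    have h3 : (∫ t in Icc (s - 1) s, ψ t * Real.exp (lψ * t)) ≤ ∫ t, ψ t * Real.exp (lψ * t) :=
      setIntegral_le_integral hlψ_int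
        (Eventually.of_forall fun t => mul_nonneg (hψ0 t) (Real.exp_pos _).le)
    have h4 : Real.exp (lψ * s) = Real.exp (lψ * (s - 1)) * Real.exp lψ := by
      rw [← Real.exp_add]
      congr 1
      ring
    rw [h4, ← mul_assoc]
    nlinarith [h1.trans h3, Real.exp_pos lψ]
  have hgtop : Tendsto (fun s : ℝ => (c : ℂ) * (ψ s : ℂ) * Complex.exp (z * s)) atTop (nhds 0) := by
    set M := ∫ t, ψ t * Real.exp (lψ * t) with hM
    have h5 : Tendsto (fun s : ℝ => Real.exp ((z.re - lψ) * s)) atTop (nhds 0) := by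
      have h6 : Tendsto (fun s : ℝ => (lψ - z.re) * s) atTop atTop :=
        Tendsto.const_mul_atTop (by linarith) tendsto_id
      have h7 := Real.tendsto_exp_atBot.comp (tendsto_neg_atTop_atBot.comp h6)
      refine h7.congr fun s => ?_
      simp only [Function.comp_apply]
      congr 1
      ring
    refine squeeze_zero_norm (fun s => ?_)
      (by simpa using h5.const_mul (|c| * (Real.exp lψ * M)))
    rw [hnorm s]
    have h8 : Real.exp (z.re * s) = Real.exp (lψ * s) * Real.exp ((z.re - lψ) * s) := by
      rw [← Real.exp_add]
      congr 1
      ring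
    rw [h8]
    have h9 : ψ s * (Real.exp (lψ * s) * Real.exp ((z.re - lψ) * s))
        ≤ (Real.exp lψ * M) * Real.exp ((z.re - lψ) * s) := by
      rw [← mul_assoc]
      exact mul_le_mul_of_nonneg_right (hψbound s) (Real.exp_pos _).le
    calc |c| * (ψ s * (Real.exp (lψ * s) * Real.exp ((z.re - lψ) * s)))
        ≤ |c| * ((Real.exp lψ * M) * Real.exp ((z.re - lψ) * s)) :=
          mul_le_mul_of_nonneg_left h9 (abs_nonneg c)
      _ = |c| * (Real.exp lψ * M) * Real.exp ((z.re - lψ) * s) := by ring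
  -- integration by parts on the whole line
  have hIBP : (∫ s : ℝ, ((c : ℂ) * (↑(deriv ψ s) : ℂ) * Complex.exp (z * s)
      + (c : ℂ) * (ψ s : ℂ) * (Complex.exp (z * s) * z))) = 0 - 0 :=
    integral_of_hasDerivAt_of_tendsto hgderiv (hDint1.add hDint2) hgbot hgtop
  rw [integral_add hDint1 hDint2] at hIBP
  have hsplit2 : (∫ s : ℝ, (c : ℂ) * (ψ s : ℂ) * (Complex.exp (z * s) * z))
      = (∫ s : ℝ, (ψ s : ℂ) * Complex.exp (z * s)) * ((c : ℂ) * z) := by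
    rw [show (fun s : ℝ => (c : ℂ) * (ψ s : ℂ) * (Complex.exp (z * s) * z))
      = fun s : ℝ => ((ψ s : ℂ) * Complex.exp (z * s)) * ((c : ℂ) * z) from
      funext fun s => by ring, integral_mul_const]
  rw [hsplit2] at hIBP
  -- integrate the profile equation
  have hS : (∫ s : ℝ, (c : ℂ) * (↑(deriv ψ s) : ℂ) * Complex.exp (z * s))
      = ((m : ℂ) * (∫ s : ℝ, (ψ s : ℂ) * Complex.exp (z * s))
        + (κnl : ℂ) * (∫ s : ℝ, ((ψ s * ∫ τ, an (s - τ) * ψ τ : ℝ) : ℂ) * Complex.exp (z * s))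
        + (κl : ℂ) * (∫ s : ℝ, ((ψ s ^ 2 : ℝ) : ℂ) * Complex.exp (z * s)))
      - (κp : ℂ) * ((∫ s : ℝ, (ap s : ℂ) * Complex.exp (z * s))
          * (∫ s : ℝ, (ψ s : ℂ) * Complex.exp (z * s))) := by
    have hi1 : Integrable (fun s : ℝ => (m : ℂ) * ((ψ s : ℂ) * Complex.exp (z * s))) volume :=
      hψC.const_mul _
    have hi2 : Integrable (fun s : ℝ => (κnl : ℂ)
        * (((ψ s * ∫ τ, an (s - τ) * ψ τ : ℝ) : ℂ) * Complex.exp (z * s))) volume :=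
      hNC.const_mul _
    have hi3 : Integrable (fun s : ℝ => (κl : ℂ)
        * (((ψ s ^ 2 : ℝ) : ℂ) * Complex.exp (z * s))) volume := hQC.const_mul _
    have hi4 : Integrable (fun s : ℝ => (κp : ℂ)
        * (((∫ τ, ap (s - τ) * ψ τ : ℝ) : ℂ) * Complex.exp (z * s))) volume :=
      hconvapC.const_mul _
    have hi12 : Integrable (fun s : ℝ => (m : ℂ) * ((ψ s : ℂ) * Complex.exp (z * s))
        + (κnl : ℂ) * (((ψ s * ∫ τ, an (s - τ) * ψ τ : ℝ) : ℂ) * Complex.exp (z * s))) volume :=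
      hi1.add hi2
    have hi123 : Integrable (fun s : ℝ => (m : ℂ) * ((ψ s : ℂ) * Complex.exp (z * s))
        + (κnl : ℂ) * (((ψ s * ∫ τ, an (s - τ) * ψ τ : ℝ) : ℂ) * Complex.exp (z * s))
        + (κl : ℂ) * (((ψ s ^ 2 : ℝ) : ℂ) * Complex.exp (z * s))) volume := hi12.add hi3
    rw [integral_congr_ae (Eventually.of_forall hode'),
      integral_sub hi123 hi4, integral_add hi12 hi3, integral_add hi1 hi2,
      integral_const_mul, integral_const_mul, integral_const_mul, integral_const_mul, hAI]
  have hQeq : (∫ s : ℝ, ((ψ s : ℂ)) ^ 2 * Complex.exp (z * s))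
      = ∫ s : ℝ, ((ψ s ^ 2 : ℝ) : ℂ) * Complex.exp (z * s) := by
    refine integral_congr_ae (Eventually.of_forall fun s => ?_)
    push_cast
    ring
  rw [hQeq]
  linear_combination hIBP - hS

end
end

section
/- Let a : ℝ → [0,∞) be a probability density, κ⁺ > 0, m, c ∈ ℝ and μ > 0 with ∫ a(s)e^{μs} ds < ∞, and define the characteristic function h(z) := κ⁺∫ a(s)e^{zs} ds − m − cz for Re z = μ. If h(μ) = 0 and h(μ + iβ) = 0 for some β ∈ ℝ, then β = 0. Equivalently: if ∫ a(s)e^{μs}(cos(βs) − 1) ds = 0, then β = 0. -/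
open MeasureTheory Real Set Filter

/-- the characteristic function
`h(z) = κ⁺ ∫ a(s) e^{z s} ds - m - c z` has no root on the line `Re z = μ`
other than `z = μ` itself: if `h(μ) = 0` and `h(μ + iβ) = 0`, then `β = 0`. -/
theorem char_function_no_complex_roots
    (a : ℝ → ℝ) (ha_int : Integrable a) (ha_nonneg : ∀ s, 0 ≤ a s)
    (ha_one : (∫ s, a s) = 1)
    (κp m c μ : ℝ) (hκp : 0 < κp) (hμ : 0 < μ)
    (hint : Integrable fun s => a s * Real.exp (μ * s)) (β : ℝ)
    (h1 : (κp : ℂ) * (∫ s : ℝ, (a s : ℂ) * Complex.exp ((μ : ℂ) * s))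
        - (m : ℂ) - (c : ℂ) * (μ : ℂ) = 0)
    (h2 : (κp : ℂ) * (∫ s : ℝ, (a s : ℂ) * Complex.exp (((μ : ℂ) + β * Complex.I) * s))
        - (m : ℂ) - (c : ℂ) * ((μ : ℂ) + β * Complex.I) = 0) :
    β = 0 := by
  by_contra hβ
  set f : ℝ → ℝ := fun s => a s * Real.exp (μ * s) with hfdef
  have hf_nonneg : ∀ s, 0 ≤ f s := fun s => mul_nonneg (ha_nonneg s) (Real.exp_pos _).le
  -- rewrite the second integrand
  have hkey : ∀ s : ℝ,
      (a s : ℂ) * Complex.exp (((μ : ℂ) + β * Complex.I) * s)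
        = Complex.exp ((β * s : ℝ) * Complex.I) * (f s : ℂ) := by
    intro s
    have : ((μ : ℂ) + β * Complex.I) * s = ((μ * s : ℝ) : ℂ) + ((β * s : ℝ) : ℂ) * Complex.I := by
      push_cast; ring
    rw [this, Complex.exp_add, ← Complex.ofReal_exp]
    simp [hfdef]
    ring
  -- integrability of the complex integrand
  have hg_int : Integrable fun s : ℝ =>
      Complex.exp ((β * s : ℝ) * Complex.I) * (f s : ℂ) := by
    refine Integrable.bdd_mul (c := 1) hint.ofReal ?_ ?_
    · exact (Complex.continuous_exp.comp ((Complex.continuous_ofReal.comp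
        (continuous_const.mul continuous_id)).mul continuous_const)).aestronglyMeasurable
    · filter_upwards with s
      rw [Complex.norm_exp_ofReal_mul_I]
  -- the real part of the second integral equals ∫ f s cos (β s)
  have hI2re : (∫ s : ℝ, (a s : ℂ) * Complex.exp (((μ : ℂ) + β * Complex.I) * s)).re
      = ∫ s : ℝ, f s * Real.cos (β * s) := by
    simp_rw [hkey]
    have h := integral_re (𝕜 := ℂ) hg_int
    rw [RCLike.re_to_complex] at h
    rw [← h]
    congr 1
    ext s
    rw [RCLike.re_to_complex, Complex.mul_re]
    simp only [Complex.exp_ofReal_mul_I_re, Complex.exp_ofReal_mul_I_im,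
      Complex.ofReal_re, Complex.ofReal_im]
    ring
  -- the first integral is real, equal to ∫ f
  have hI1 : (∫ s : ℝ, (a s : ℂ) * Complex.exp ((μ : ℂ) * s)) = ((∫ s, f s : ℝ) : ℂ) := by
    rw [show (((∫ s, f s : ℝ)) : ℂ) = RCLike.ofReal (∫ s, f s) from rfl, ← integral_ofReal]
    congr 1
    ext s
    simp only [hfdef, Complex.ofReal_mul, Complex.ofReal_exp]
    norm_cast
  -- subtract the two equations and take real parts
  have hsub : (κp : ℂ) * ((∫ s : ℝ, (a s : ℂ) * Complex.exp (((μ : ℂ) + β * Complex.I) * s))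
      - (∫ s : ℝ, (a s : ℂ) * Complex.exp ((μ : ℂ) * s))) = (c : ℂ) * (β * Complex.I) := by
    have := sub_eq_zero.mpr (h2.trans h1.symm)
    ring_nf at this ⊢
    linear_combination this
  have hre : κp * ((∫ s : ℝ, f s * Real.cos (β * s)) - ∫ s, f s) = 0 := by
    have := congrArg Complex.re hsub
    simpa [hI1, hI2re, Complex.add_re, Complex.sub_re, Complex.mul_re] using this
  have hcos_int : Integrable fun s => f s * Real.cos (β * s) := by
    have h := Integrable.bdd_mul (c := 1)
      (f := fun s : ℝ => Real.cos (β * s)) hint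
      ((Real.continuous_cos.comp (continuous_const.mul continuous_id)).aestronglyMeasurable)
      (by filter_upwards with s using by simpa using abs_cos_le_one (β * s))
    simpa [mul_comm] using h
  have heq : (∫ s, f s * (1 - Real.cos (β * s))) = 0 := by
    have : (fun s => f s * (1 - Real.cos (β * s))) = fun s => f s - f s * Real.cos (β * s) := by
      ext s; ring
    rw [this, integral_sub hint hcos_int]
    have h0 : (∫ s : ℝ, f s * Real.cos (β * s)) - ∫ s, f s = 0 := by
      rcases mul_eq_zero.mp hre with h | h
      · exact absurd h hκp.ne'
      · exact h
    linarith
  -- a.e. vanishing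
  have hnn : 0 ≤ fun s => f s * (1 - Real.cos (β * s)) := by
    intro s
    have : Real.cos (β * s) ≤ 1 := Real.cos_le_one _
    exact mul_nonneg (hf_nonneg s) (by linarith)
  have hint2 : Integrable fun s => f s * (1 - Real.cos (β * s)) := by
    have : (fun s => f s * (1 - Real.cos (β * s))) = fun s => f s - f s * Real.cos (β * s) := by
      ext s; ring
    rw [this]; exact hint.sub hcos_int
  have hae : (fun s => f s * (1 - Real.cos (β * s))) =ᵐ[volume] 0 :=
    (integral_eq_zero_iff_of_nonneg hnn hint2).mp heq
  -- the set where cos (β s) = 1 is null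
  have hnull : volume {s : ℝ | Real.cos (β * s) = 1} = 0 := by
    have hsub : {s : ℝ | Real.cos (β * s) = 1} ⊆ ⋃ n : ℤ, {((n : ℝ) * (2 * π)) / β} := by
      intro s hs
      rcases (Real.cos_eq_one_iff _).mp hs with ⟨n, hn⟩
      refine mem_iUnion.mpr ⟨n, ?_⟩
      simp only [mem_singleton_iff]
      field_simp
      linarith [hn]
    refine measure_mono_null hsub ?_
    exact measure_iUnion_null fun n => measure_singleton _
  -- hence a = 0 a.e.
  have hae0 : a =ᵐ[volume] 0 := by
    have hcompl : ∀ᵐ s : ℝ, Real.cos (β * s) ≠ 1 :=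
      (ae_iff.mpr (by simpa using hnull))
    filter_upwards [hae, hcompl] with s hs hcs
    have hs' : f s * (1 - Real.cos (β * s)) = 0 := hs
    have h1c : 1 - Real.cos (β * s) ≠ 0 := fun h => hcs (by linarith)
    have hfs : f s = 0 := by
      rcases mul_eq_zero.mp hs' with h | h
      · exact h
      · exact absurd h h1c
    have := mul_eq_zero.mp hfs
    rcases this with h | h
    · exact h
    · exact absurd h (Real.exp_pos _).ne'
  have : (∫ s, a s) = 0 := by
    rw [integral_congr_ae hae0]; simp
  rw [ha_one] at this
  exact one_ne_zero this
end

section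
/- Suppose additionally that the first moment of a⁺ vanishes, 𝔪 := ∫ s·a⁺(s) ds = 0 (for instance if a⁺ is an even function). Then every traveling-wave speed is positive: if ψ is a traveling-wave profile with speed c, then c > 0. -/
open MeasureTheory Real Set Filter

noncomputable section

/-!
If `c ≤ 0`, then `c ψ' ≥ 0`, and since `ψ ≤ θ` the competition terms are at most
`(κ_l + κ_{nl}) θ ψ = (κ⁺ - m) ψ`; the equation then forces `a⁺ * ψ ≤ ψ`. Multiplying by `e^{ls}`
for a small `l > 0` and integrating gives `A(l) Ψ(l) ≤ Ψ(l)` with `Ψ(l) = ∫ ψ(s) e^{ls} ds > 0`,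
so `A(l) = ∫ a⁺(s) e^{ls} ds ≤ 1`. But for a centred probability density
`A(l) - 1 = ∫ a⁺(s) (e^{ls} - 1 - ls) ds > 0`.
-/

open scoped Convolution

lemma integrable_mul_exp_of_le {g : ℝ → ℝ} {C l μ : ℝ} (hg : AEStronglyMeasurable g)
    (hC : ∀ s, |g s| ≤ C) (hμ : Integrable fun s => g s * exp (μ * s)) (hl : 0 < l)
    (hlμ : l ≤ μ) : Integrable fun s => g s * exp (l * s) := by
  have hmeas : AEStronglyMeasurable (fun s => g s * exp (l * s)) :=
    hg.mul (by fun_prop)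
  rw [← integrableOn_univ, ← Iic_union_Ioi (a := (0 : ℝ)), integrableOn_union]
  constructor
  · refine ((integrableOn_exp_mul_Iic hl 0).const_mul C).mono' hmeas.restrict
      (ae_of_all _ fun s => ?_)
    rw [norm_mul, norm_eq_abs, norm_of_nonneg (exp_pos _).le]
    exact mul_le_mul_of_nonneg_right (hC s) (exp_pos _).le
  · refine hμ.norm.integrableOn.mono' hmeas.restrict ?_
    filter_upwards [ae_restrict_mem measurableSet_Ioi] with s hs
    rw [norm_mul, norm_mul, norm_of_nonneg (exp_pos _).le, norm_of_nonneg (exp_pos _).le]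
    gcongr
    exact hs.le

lemma one_lt_integral_mul_exp {a : ℝ → ℝ} {l : ℝ} (ha0 : ∀ s, 0 ≤ a s) (ha : Integrable a)
    (haI : ∫ s, a s = 1) (hmom : Integrable fun s => s * a s) (hcentred : ∫ s, s * a s = 0)
    (hl : l ≠ 0) (hal : Integrable fun s => a s * exp (l * s)) :
    1 < ∫ s, a s * exp (l * s) := by
  set h : ℝ → ℝ := fun s => a s * (exp (l * s) - 1 - l * s)
  have h_eq : h = fun s => (a s * exp (l * s) - a s) - l * (s * a s) := by
    funext s; ring
  have h₁ : Integrable fun s => a s * exp (l * s) - a s := hal.sub ha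
  have h₂ : Integrable fun s => l * (s * a s) := hmom.const_mul l
  have h_int : Integrable h := h_eq ▸ h₁.sub h₂
  have h_val : ∫ s, h s = (∫ s, a s * exp (l * s)) - 1 := by
    simp only [h_eq]
    rw [integral_sub h₁ h₂, integral_sub hal ha, integral_const_mul, haI, hcentred]
    ring
  have h_nonneg : 0 ≤ h := fun s => mul_nonneg (ha0 s) (by linarith [add_one_le_exp (l * s)])
  have h_support : Function.support h = Function.support a \ {0} := by
    ext s
    by_cases hs : s = 0
    · simp [h, hs]
    · have : 0 < exp (l * s) - 1 - l * s := by
        linarith [add_one_lt_exp (mul_ne_zero hl hs)]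
      simp [h, hs, this.ne']
  have h_pos : 0 < ∫ s, h s := by
    rw [integral_pos_iff_support_of_nonneg h_nonneg h_int, h_support,
      measure_sdiff_null (measure_singleton 0)]
    exact (integral_pos_iff_support_of_nonneg ha0 ha).mp (haI ▸ one_pos)
  linarith

lemma integral_mul_exp_pos_of_antitone {g : ℝ → ℝ} {l : ℝ} (hg : Antitone g)
    (hg0 : ∀ s, 0 ≤ g s) (hpos : ∃ s, 0 < g s) (hint : Integrable fun s => g s * exp (l * s)) :
    0 < ∫ s, g s * exp (l * s) := by
  obtain ⟨s₀, hs₀⟩ := hpos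
  rw [integral_pos_iff_support_of_nonneg (fun s => mul_nonneg (hg0 s) (exp_pos _).le) hint]
  have h_sub : Iic s₀ ⊆ Function.support fun s => g s * exp (l * s) := fun s hs =>
    (mul_pos (hs₀.trans_le (hg hs)) (exp_pos _)).ne'
  exact (measure_mono h_sub).trans_lt' (by simp)

lemma convolution_mul_exp (f g : ℝ → ℝ) (l s : ℝ) :
    ((fun t => f t * exp (l * t)) ⋆ fun t => g t * exp (l * t)) s
      = exp (l * s) * ∫ τ, f (s - τ) * g τ := by
  rw [convolution_lsmul_swap, ← integral_const_mul]
  congr 1 with τ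
  rw [show l * s = l * (s - τ) + l * τ by ring, exp_add]
  ring

lemma integral_mul_exp_le_one_of_convolution_le {f g : ℝ → ℝ} {l : ℝ}
    (hf : Integrable fun s => f s * exp (l * s)) (hg : Integrable fun s => g s * exp (l * s))
    (hfg : ∀ s, ∫ τ, f (s - τ) * g τ ≤ g s) (hpos : 0 < ∫ s, g s * exp (l * s)) :
    ∫ s, f s * exp (l * s) ≤ 1 := by
  have hle : (∫ s, f s * exp (l * s)) * ∫ s, g s * exp (l * s) ≤ ∫ s, g s * exp (l * s) :=
    calc (∫ s, f s * exp (l * s)) * ∫ s, g s * exp (l * s)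
        = ∫ s, ((fun t => f t * exp (l * t)) ⋆ fun t => g t * exp (l * t)) s := by
          rw [integral_convolution _ hf hg]; rfl
      _ ≤ ∫ s, g s * exp (l * s) := by
          refine integral_mono (hf.integrable_convolution _ hg) hg fun s => ?_
          rw [convolution_mul_exp, mul_comm (g s)]
          exact mul_le_mul_of_nonneg_left (hfg s) (exp_pos _).le
  exact (mul_le_iff_le_one_left hpos).mp hle

lemma integral_sub_mul_le_of_le {a g : ℝ → ℝ} {θ : ℝ} (ha : Integrable a) (ha0 : ∀ s, 0 ≤ a s)
    (haI : ∫ s, a s = 1) (hg0 : ∀ s, 0 ≤ g s)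
    (hgθ : ∀ s, g s ≤ θ) (s : ℝ) : ∫ τ, a (s - τ) * g τ ≤ θ := by
  have ha_shift : Integrable fun τ => a (s - τ) := ha.comp_sub_left s
  calc ∫ τ, a (s - τ) * g τ
      ≤ ∫ τ, a (s - τ) * θ := by
        refine integral_mono_of_nonneg (ae_of_all _ fun τ => mul_nonneg (ha0 _) (hg0 τ))
          (ha_shift.mul_const θ) (ae_of_all _ fun τ => ?_)
        exact mul_le_mul_of_nonneg_left (hgθ τ) (ha0 _)
    _ = θ := by rw [integral_mul_const, integral_sub_left_eq_self a volume s, haI, one_mul]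

lemma convolution_le_self_of_speed_nonpos {κp m κl κnl θ c : ℝ} {ap an ψ : ℝ → ℝ}
    (hker : KernelHyp κp m κl κnl θ ap an) (htw : IsTW κp m κl κnl θ ap an c ψ) (hc : c ≤ 0)
    (s : ℝ) : ∫ τ, ap (s - τ) * ψ τ ≤ ψ s := by
  obtain ⟨hm, hmκ, hκl, hκnl, hκsum, hθ, -, -, -, hanInt, han0, hanI, -⟩ := hker
  obtain ⟨hrange, hanti, -, -, -, -, -, heq⟩ := htw
  have hθeq : (κl + κnl) * θ = κp - m := by rw [hθ]; field_simp
  have hψ0 : 0 ≤ ψ s := (hrange s).1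
  have han_conv : ∫ τ, an (s - τ) * ψ τ ≤ θ :=
    integral_sub_mul_le_of_le hanInt han0 hanI (fun τ => (hrange τ).1) (fun τ => (hrange τ).2) s
  have h_nl : κnl * ψ s * (∫ τ, an (s - τ) * ψ τ) ≤ κnl * ψ s * θ :=
    mul_le_mul_of_nonneg_left han_conv (mul_nonneg hκnl hψ0)
  have h_l : κl * ψ s ^ 2 ≤ κl * θ * ψ s := by
    rw [sq, ← mul_assoc, mul_right_comm]
    exact mul_le_mul_of_nonneg_right (mul_le_mul_of_nonneg_left (hrange s).2 hκl) hψ0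
  have h_drift : 0 ≤ c * deriv ψ s := mul_nonneg_of_nonpos_of_nonpos hc hanti.deriv_nonpos
  have h_sum : κnl * ψ s * θ + κl * θ * ψ s = (κp - m) * ψ s := by rw [← hθeq]; ring
  have : κp * (∫ τ, ap (s - τ) * ψ τ) ≤ κp * ψ s := by linarith [heq s]
  exact le_of_mul_le_mul_left this (hm.trans hmκ)

/-- if the first moment of `a⁺` vanishes, `𝔪 = ∫ s a⁺(s) ds = 0`
(e.g. for even `a⁺`), then every traveling-wave speed is positive. -/
theorem speed_positive_of_zero_first_moment
    (κp m κl κnl θ : ℝ) (ap an : ℝ → ℝ)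
    (hker : KernelHyp κp m κl κnl θ ap an)
    (hmom : Integrable (fun s => s * ap s))
    (h𝔪 : (∫ s, s * ap s) = 0) :
    ∀ c : ℝ, ∀ ψ : ℝ → ℝ, IsTW κp m κl κnl θ ap an c ψ → 0 < c := by
  intro c ψ htw
  by_contra! hc
  obtain ⟨hm, hmκ, -, -, hκsum, hθ, hapInt, hap0, hapI, -, -, -, ⟨C, hC⟩, -,
    ⟨μ, hμ, hapμ⟩, -⟩ := id hker
  obtain ⟨hrange, hanti, -, -, hbot, -, ⟨μ₀, hμ₀, hψμ₀⟩, -⟩ := id htw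
  have hθpos : 0 < θ := hθ ▸ div_pos (by linarith) hκsum
  set l := min μ μ₀
  have hl : 0 < l := lt_min hμ hμ₀
  have hap_l : Integrable fun s => ap s * exp (l * s) :=
    integrable_mul_exp_of_le hapInt.aestronglyMeasurable
      (fun s => (abs_of_nonneg (hap0 s)).trans_le (hC s)) hapμ hl (min_le_left _ _)
  have hψ_l : Integrable fun s => ψ s * exp (l * s) :=
    integrable_mul_exp_of_le hanti.measurable.aestronglyMeasurable
      (fun s => (abs_of_nonneg (hrange s).1).trans_le (hrange s).2) hψμ₀ hl (min_le_right _ _)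
  have hΨ : 0 < ∫ s, ψ s * exp (l * s) :=
    integral_mul_exp_pos_of_antitone hanti (fun s => (hrange s).1)
      (hbot.eventually (lt_mem_nhds hθpos)).exists hψ_l
  have hA_gt : 1 < ∫ s, ap s * exp (l * s) :=
    one_lt_integral_mul_exp hap0 hapInt hapI hmom h𝔪 hl.ne' hap_l
  have hA_le : ∫ s, ap s * exp (l * s) ≤ 1 :=
    integral_mul_exp_le_one_of_convolution_le hap_l hψ_l
      (convolution_le_self_of_speed_nonpos hker htw hc) hΨ
  linarith

end
end
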